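/- arXiv:2511.08164 — 3 statements merged into one kernel-verified Lean document; each statement's English description precedes it below -/
import Mathlib

section
/- For all real numbers C ≥ 0 and T > 0, there exists a constant C′ ≥ 0 with the following property: for every τ > 0, every natural number N with Nτ ≤ T, every b ≥ 0, and every sequence of nonnegative reals (a_n)_{n=0}^{N} with a_0 = 0 satisfying a_n ≤ b + Cτ·∑_{k=1}^{n−1} (1 + ((n−k)τ)^{−1/2})·a_k for all 1 ≤ n ≤ N, one has a_n ≤ C′·b for all 0 ≤ n ≤ N. -/
open Finset



lemma dg_sum_inv_sqrt_le (m : ℕ) :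
    ∑ j ∈ Finset.Ioc 0 m, 1 / Real.sqrt j ≤ 2 * Real.sqrt m := by
  induction m with
  | zero => simp
  | succ m ih =>
    rw [Finset.sum_Ioc_succ_top (Nat.zero_le _)]
    have h1 : (0:ℝ) < Real.sqrt (m+1) := Real.sqrt_pos.2 (by positivity)
    have h2 : Real.sqrt m ^ 2 = (m:ℝ) := Real.sq_sqrt (by positivity)
    have h3 : Real.sqrt (m+1) ^ 2 = ((m:ℝ)+1) := Real.sq_sqrt (by positivity)
    have key : 1 / Real.sqrt (m+1) ≤ 2 * Real.sqrt (m+1) - 2 * Real.sqrt m := by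
      rw [div_le_iff₀ h1]
      nlinarith [sq_nonneg (Real.sqrt (m+1) - Real.sqrt m), Real.sqrt_nonneg (m:ℝ)]
    have : ((m:ℝ)+1) = ((m+1 : ℕ) : ℝ) := by push_cast; ring
    push_cast
    linarith

lemma dg_sum_inv_pow32_le (M : ℕ) (hM : 1 ≤ M) (m : ℕ) :
    ∑ j ∈ Finset.Ioc M m, 1 / ((j:ℝ) * Real.sqrt j) ≤ 2 / Real.sqrt M := by
  rcases le_or_gt m M with h | h
  · rw [Finset.Ioc_eq_empty (by omega)]
    have : (0:ℝ) < Real.sqrt M := Real.sqrt_pos.2 (by exact_mod_cast Nat.pos_of_ne_zero (by omega))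
    simp
    positivity
  · have main : ∀ n, M ≤ n → ∑ j ∈ Finset.Ioc M n, 1 / ((j:ℝ) * Real.sqrt j)
        ≤ 2 / Real.sqrt M - 2 / Real.sqrt n := by
      intro n hn
      refine Nat.le_induction ?_ ?_ n hn
      · simp
      · intro n hn IH
        rw [Finset.sum_Ioc_succ_top (by omega)]
        have hn1 : (1:ℝ) ≤ (n:ℝ) := by exact_mod_cast (hM.trans hn)
        have hs : (0:ℝ) < Real.sqrt n := Real.sqrt_pos.2 (by linarith)
        have hs1 : (0:ℝ) < Real.sqrt ((n:ℝ)+1) := Real.sqrt_pos.2 (by linarith)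
        have h2 : Real.sqrt n ^ 2 = (n:ℝ) := Real.sq_sqrt (by linarith)
        have h3 : Real.sqrt ((n:ℝ)+1) ^ 2 = ((n:ℝ)+1) := Real.sq_sqrt (by linarith)
        have key : 1 / (((n:ℝ)+1) * Real.sqrt ((n:ℝ)+1))
            ≤ 2 / Real.sqrt n - 2 / Real.sqrt ((n:ℝ)+1) := by
          rw [div_sub_div _ _ (ne_of_gt hs) (ne_of_gt hs1), div_le_div_iff₀ (by positivity) (by positivity)]
          nlinarith [sq_nonneg (Real.sqrt ((n:ℝ)+1) - Real.sqrt n), Real.sqrt_nonneg (n:ℝ),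
            mul_pos hs hs1]
        have hc : ((n+1 : ℕ) : ℝ) = (n:ℝ)+1 := by push_cast; ring
        rw [hc]
        linarith
    have h1 := main m (le_of_lt h)
    have h2 : (0:ℝ) ≤ 2 / Real.sqrt m := by positivity
    linarith

lemma dg_sum_exp_le (x : ℝ) (hx : 0 < x) (m : ℕ) :
    ∑ j ∈ Finset.Ioc 0 m, Real.exp (-(x * j)) ≤ 1 / x := by
  have hy : Real.exp (-x) < 1 := Real.exp_lt_one_iff.2 (by linarith)
  have hy0 : 0 < Real.exp (-x) := Real.exp_pos _
  set y := Real.exp (-x) with hydef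
  have hy1 : (0:ℝ) < 1 - y := by linarith
  have hformula : ∀ m : ℕ, ∑ j ∈ Finset.Ioc 0 m, y ^ j = (y - y ^ (m+1)) / (1 - y) := by
    intro m
    induction m with
    | zero => simp
    | succ m ih =>
      rw [Finset.sum_Ioc_succ_top (Nat.zero_le _), ih]
      field_simp
      ring
  have hsum : ∀ m : ℕ, ∑ j ∈ Finset.Ioc 0 m, y ^ j ≤ y / (1 - y) := by
    intro m
    rw [hformula m]
    have : (0:ℝ) ≤ y ^ (m+1) := by positivity
    gcongr
    linarith
  have heq : ∀ j ∈ Finset.Ioc 0 m, Real.exp (-(x * j)) = y ^ j := by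
    intro j _
    rw [hydef, ← Real.exp_nat_mul]
    ring_nf
  rw [Finset.sum_congr rfl heq]
  refine (hsum m).trans ?_
  rw [div_le_div_iff₀ (by linarith) hx]
  have hyex : y * Real.exp x = 1 := by rw [hydef, ← Real.exp_add]; simp
  nlinarith [mul_le_mul_of_nonneg_left (Real.add_one_le_exp x) hy0.le]



lemma dg_sqrt2_le : Real.sqrt 2 ≤ 3/2 := by
  nlinarith [Real.sq_sqrt (by norm_num : (0:ℝ) ≤ 2), Real.sqrt_nonneg 2]

lemma dg_sum_sqrt_exp_le (x : ℝ) (hx : 0 < x) (m : ℕ) :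
    ∑ j ∈ Finset.Ioc 0 m, (1 / Real.sqrt j) * Real.exp (-(x * j)) ≤ 5 / Real.sqrt x := by
  have hsx : 0 < Real.sqrt x := Real.sqrt_pos.2 hx
  rcases le_or_gt 1 x with hx1 | hx1
  · -- large x : bound by geometric sum
    have h1 : ∑ j ∈ Finset.Ioc 0 m, (1 / Real.sqrt j) * Real.exp (-(x * j))
        ≤ ∑ j ∈ Finset.Ioc 0 m, Real.exp (-(x * j)) := by
      apply Finset.sum_le_sum
      intro j hj
      have hj1 : 1 ≤ j := (Finset.mem_Ioc.1 hj).1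
      have : (1:ℝ) ≤ Real.sqrt j := by
        rw [show (1:ℝ) = Real.sqrt 1 by simp]
        exact Real.sqrt_le_sqrt (by exact_mod_cast hj1)
      have he : (0:ℝ) < Real.exp (-(x * j)) := Real.exp_pos _
      have hd : 1 / Real.sqrt j ≤ 1 := by
        rw [div_le_one (by linarith)]
        linarith
      calc (1 / Real.sqrt j) * Real.exp (-(x * j)) ≤ 1 * Real.exp (-(x * j)) := by gcongr
        _ = Real.exp (-(x * j)) := one_mul _
    refine h1.trans ((dg_sum_exp_le x hx m).trans ?_)
    have hsx1 : Real.sqrt x ≤ x := by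
      rw [Real.sqrt_le_left (by linarith)]
      nlinarith
    have h2 : 1 / x ≤ 1 / Real.sqrt x := by gcongr
    have h3 : 1 / Real.sqrt x ≤ 5 / Real.sqrt x := by gcongr <;> norm_num
    linarith
  · -- small x : split at M = ⌈1/x⌉
    set M := ⌈1/x⌉₊ with hMdef
    have hinv1 : 1 < 1/x := by rw [lt_div_iff₀ hx]; linarith
    have hM1 : 1 ≤ M := Nat.one_le_iff_ne_zero.2 (by
      intro h
      have := Nat.le_ceil (1/x)
      rw [← hMdef, h] at this
      norm_num at this
      linarith)
    have hMge : 1/x ≤ (M:ℝ) := Nat.le_ceil _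
    have hMle : (M:ℝ) ≤ 2/x := by
      have := Nat.ceil_lt_add_one (by positivity : (0:ℝ) ≤ 1/x)
      rw [← hMdef] at this
      have h2 : 1/x + 1 ≤ 2/x := by
        rw [div_add' _ _ _ (ne_of_gt hx), div_le_div_iff₀ hx hx]
        nlinarith
      linarith
    have hsM : Real.sqrt M ≤ (3/2) / Real.sqrt x := by
      have h1 : Real.sqrt ((M:ℝ)) ≤ Real.sqrt (2/x) := Real.sqrt_le_sqrt hMle
      have h2 : Real.sqrt (2/x) = Real.sqrt 2 / Real.sqrt x :=
        Real.sqrt_div (by norm_num) x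
      have h3 : Real.sqrt 2 / Real.sqrt x ≤ (3/2) / Real.sqrt x := by
        gcongr
        exact dg_sqrt2_le
      linarith
    have hsMinv : 1 / Real.sqrt M ≤ Real.sqrt x := by
      have h0 : 0 < Real.sqrt M := Real.sqrt_pos.2 (by positivity)
      rw [div_le_iff₀ h0]
      have : 1 / Real.sqrt x ≤ Real.sqrt M := by
        rw [show 1 / Real.sqrt x = Real.sqrt (1/x) by
          rw [Real.sqrt_div (by norm_num) x]; simp]
        exact Real.sqrt_le_sqrt hMge
      calc (1:ℝ) = Real.sqrt x * (1 / Real.sqrt x) := by field_simp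
        _ ≤ Real.sqrt x * Real.sqrt M := by gcongr
    have hpart1 : ∀ K : ℕ, ∑ j ∈ Finset.Ioc 0 K, (1 / Real.sqrt j) * Real.exp (-(x * j))
        ≤ 2 * Real.sqrt K := by
      intro K
      refine (Finset.sum_le_sum ?_).trans (dg_sum_inv_sqrt_le K)
      intro j hj
      have he : Real.exp (-(x * j)) ≤ 1 := by
        rw [Real.exp_le_one_iff]
        have : (0:ℝ) ≤ (j:ℝ) := Nat.cast_nonneg j
        nlinarith
      have hs : (0:ℝ) ≤ 1 / Real.sqrt j := by positivity
      nlinarith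
    rcases le_or_gt m M with hmM | hmM
    · refine (hpart1 m).trans ?_
      have : Real.sqrt (m:ℝ) ≤ Real.sqrt (M:ℝ) := Real.sqrt_le_sqrt (by exact_mod_cast hmM)
      have h5 : (0:ℝ) < 1 / Real.sqrt x := by positivity
      calc 2 * Real.sqrt m ≤ 2 * ((3/2) / Real.sqrt x) := by linarith
        _ = 3 / Real.sqrt x := by ring
        _ ≤ 5 / Real.sqrt x := by gcongr <;> norm_num
    · rw [← Finset.sum_Ioc_consecutive _ (Nat.zero_le M) (le_of_lt hmM)]
      have hpart2 : ∑ j ∈ Finset.Ioc M m, (1 / Real.sqrt j) * Real.exp (-(x * j))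
          ≤ 2 / Real.sqrt x := by
        have hstep : ∑ j ∈ Finset.Ioc M m, (1 / Real.sqrt j) * Real.exp (-(x * j))
            ≤ ∑ j ∈ Finset.Ioc M m, (1/x) * (1 / ((j:ℝ) * Real.sqrt j)) := by
          apply Finset.sum_le_sum
          intro j hj
          have hj1 : 1 ≤ j := le_trans hM1 (le_of_lt (Finset.mem_Ioc.1 hj).1)
          have hjR : (1:ℝ) ≤ (j:ℝ) := by exact_mod_cast hj1
          have hsj : 0 < Real.sqrt j := Real.sqrt_pos.2 (by linarith)
          have hxj : 0 < x * j := by positivity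
          have he : Real.exp (-(x * j)) ≤ 1 / (x * j) := by
            rw [Real.exp_neg]
            rw [inv_eq_one_div, div_le_div_iff₀ (Real.exp_pos _) hxj]
            nlinarith [Real.add_one_le_exp (x * (j:ℝ))]
          calc (1 / Real.sqrt j) * Real.exp (-(x * j)) ≤ (1 / Real.sqrt j) * (1 / (x * j)) := by
                gcongr
            _ = (1/x) * (1 / ((j:ℝ) * Real.sqrt j)) := by field_simp
        rw [← Finset.mul_sum] at hstep
        refine hstep.trans ?_
        have h2 := dg_sum_inv_pow32_le M hM1 m
        have hx0 : 0 < 1/x := by positivity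
        calc (1/x) * ∑ j ∈ Finset.Ioc M m, (1 / ((j:ℝ) * Real.sqrt j))
            ≤ (1/x) * (2 / Real.sqrt M) := by gcongr
          _ ≤ (1/x) * (2 * Real.sqrt x) := by
              rw [show (2:ℝ) / Real.sqrt M = 2 * (1/Real.sqrt M) by ring]
              gcongr
          _ = 2 / Real.sqrt x := by
              rw [eq_div_iff (ne_of_gt hsx)]
              have : Real.sqrt x * Real.sqrt x = x := Real.mul_self_sqrt (le_of_lt hx)
              field_simp
              nlinarith
      have h1 := hpart1 M
      have h3 : 2 * Real.sqrt (M:ℝ) ≤ 3 / Real.sqrt x := by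
        have he : 3 / Real.sqrt x = 2 * (3 / 2 / Real.sqrt x) := by ring
        linarith
      calc ∑ j ∈ Finset.Ioc 0 M, (1 / Real.sqrt j) * Real.exp (-(x * j))
            + ∑ j ∈ Finset.Ioc M m, (1 / Real.sqrt j) * Real.exp (-(x * j))
          ≤ 2 * Real.sqrt (M:ℝ) + 2 / Real.sqrt x := by gcongr -- fallback
        _ ≤ 3 / Real.sqrt x + 2 / Real.sqrt x := by linarith
        _ = 5 / Real.sqrt x := by ring



lemma dg_kernel (C τ lam : ℝ) (hC : 0 ≤ C) (hτ : 0 < τ)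
    (hlam : lam = 1 + 4*C + 400*C^2) (m : ℕ) :
    C * τ * ∑ j ∈ Finset.Icc 1 m,
      (1 + ((j:ℝ) * τ) ^ (-(1/2) : ℝ)) * Real.exp (-(lam * τ * j)) ≤ 1/2 := by
  have hlam0 : 0 < lam := by rw [hlam]; positivity
  rw [show Finset.Icc 1 m = Finset.Ioc 0 m from Finset.Icc_add_one_left_eq_Ioc ..]
  have hsτ : 0 < Real.sqrt τ := Real.sqrt_pos.2 hτ
  have hx : 0 < lam * τ := by positivity
  have hrw : ∀ j ∈ Finset.Ioc 0 m,
      (1 + ((j:ℝ) * τ) ^ (-(1/2) : ℝ)) * Real.exp (-(lam * τ * j))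
      = Real.exp (-(lam * τ * j))
        + (1 / Real.sqrt τ) * ((1 / Real.sqrt j) * Real.exp (-(lam * τ * j))) := by
    intro j hj
    have hj1 : 1 ≤ j := (Finset.mem_Ioc.1 hj).1
    have hj0 : (0:ℝ) < (j:ℝ) := by exact_mod_cast hj1
    have hsj : 0 < Real.sqrt j := Real.sqrt_pos.2 hj0
    have hbase : (0:ℝ) ≤ (j:ℝ) * τ := by positivity
    have hr : ((j:ℝ) * τ) ^ (-(1/2) : ℝ)
        = 1 / (Real.sqrt j * Real.sqrt τ) := by
      rw [Real.rpow_neg hbase, ← Real.sqrt_eq_rpow, Real.sqrt_mul (le_of_lt hj0) τ,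
        one_div]
    rw [hr]
    field_simp
  rw [Finset.sum_congr rfl hrw, Finset.sum_add_distrib, ← Finset.mul_sum]
  have h1 := dg_sum_exp_le (lam * τ) hx m
  have h2 := dg_sum_sqrt_exp_le (lam * τ) hx m
  have hS2 : (0:ℝ) ≤ ∑ j ∈ Finset.Ioc 0 m, (1 / Real.sqrt j) * Real.exp (-(lam * τ * j)) := by
    apply Finset.sum_nonneg
    intro j hj
    positivity
  have hCτ : (0:ℝ) ≤ C * τ := by positivity
  have step : C * τ * (∑ j ∈ Finset.Ioc 0 m, Real.exp (-(lam * τ * j))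
        + (1 / Real.sqrt τ) * ∑ j ∈ Finset.Ioc 0 m, (1 / Real.sqrt j) * Real.exp (-(lam * τ * j)))
      ≤ C * τ * (1 / (lam * τ)) + C * τ * ((1 / Real.sqrt τ) * (5 / Real.sqrt (lam * τ))) := by
    have e1 : C * τ * (1 / Real.sqrt τ) ≥ 0 := by positivity
    nlinarith [mul_le_mul_of_nonneg_left h1 hCτ,
      mul_le_mul_of_nonneg_left h2 (by positivity : (0:ℝ) ≤ C * τ * (1 / Real.sqrt τ))]
  refine step.trans ?_
  have hss : Real.sqrt τ * Real.sqrt τ = τ := Real.mul_self_sqrt hτ.le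
  have hslam : 0 < Real.sqrt lam := Real.sqrt_pos.2 hlam0
  have e1 : C * τ * (1 / (lam * τ)) = C / lam := by field_simp
  have e2 : C * τ * ((1 / Real.sqrt τ) * (5 / Real.sqrt (lam * τ))) = 5 * C / Real.sqrt lam := by
    rw [Real.sqrt_mul hlam0.le τ]
    field_simp
    linear_combination (-C) * hss
  rw [e1, e2]
  have b1 : C / lam ≤ 1/4 := by
    rw [div_le_iff₀ hlam0, hlam]
    nlinarith
  have b2 : 5 * C / Real.sqrt lam ≤ 1/4 := by
    have h20 : 20 * C ≤ Real.sqrt lam := by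
      have : Real.sqrt ((20*C)^2) ≤ Real.sqrt lam := by
        apply Real.sqrt_le_sqrt
        rw [hlam]; nlinarith
      rwa [Real.sqrt_sq (by positivity)] at this
    rw [div_le_iff₀ hslam]
    linarith
  linarith

theorem discrete_gronwall_weakly_singular (C T : ℝ) (hC : 0 ≤ C) (hT : 0 < T) :
    ∃ C' : ℝ, 0 ≤ C' ∧
      ∀ (τ : ℝ), 0 < τ → ∀ (N : ℕ), (N : ℝ) * τ ≤ T →
        ∀ (b : ℝ), 0 ≤ b → ∀ (a : ℕ → ℝ),
          (∀ n ≤ N, 0 ≤ a n) → a 0 = 0 →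
          (∀ n, 1 ≤ n → n ≤ N →
            a n ≤ b + C * τ * ∑ k ∈ Finset.Icc 1 (n - 1),
              (1 + (((n - k : ℕ) : ℝ) * τ) ^ (-(1/2) : ℝ)) * a k) →
          ∀ n ≤ N, a n ≤ C' * b := by
  set lam : ℝ := 1 + 4*C + 400*C^2 with hlamdef
  have hlam0 : 0 < lam := by rw [hlamdef]; positivity
  refine ⟨2 * Real.exp (lam * T), by positivity, ?_⟩
  intro τ hτ N hNT b hb a ha ha0 hrec
  have key : ∀ n, n ≤ N → a n ≤ 2 * b * Real.exp (lam * (n * τ)) := by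
    intro n
    induction n using Nat.strong_induction_on with
    | _ n ih =>
      intro hnN
      rcases Nat.eq_zero_or_pos n with rfl | hn1
      · rw [ha0]; positivity
      · have hstep := hrec n hn1 hnN
        have hCτ : (0:ℝ) ≤ C * τ := by positivity
        have hsum1 : ∑ k ∈ Finset.Icc 1 (n-1), (1 + (((n - k : ℕ):ℝ) * τ) ^ (-(1/2):ℝ)) * a k
            ≤ ∑ k ∈ Finset.Icc 1 (n-1), (1 + (((n - k : ℕ):ℝ) * τ) ^ (-(1/2):ℝ))
              * (2 * b * Real.exp (lam * (k * τ))) := by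
          apply Finset.sum_le_sum
          intro k hk
          have hk' := Finset.mem_Icc.1 hk
          have hkn : k < n := by omega
          have hkN : k ≤ N := by omega
          have hcoef : 0 ≤ 1 + (((n - k : ℕ):ℝ) * τ) ^ (-(1/2):ℝ) :=
            add_nonneg zero_le_one (Real.rpow_nonneg (mul_nonneg (Nat.cast_nonneg _) hτ.le) _)
          exact mul_le_mul_of_nonneg_left (ih k hkn hkN) hcoef
        have hsum2 : ∑ k ∈ Finset.Icc 1 (n-1), (1 + (((n - k : ℕ):ℝ) * τ) ^ (-(1/2):ℝ))
              * (2 * b * Real.exp (lam * (k * τ)))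
            = 2 * b * Real.exp (lam * (n * τ)) * ∑ j ∈ Finset.Icc 1 (n-1),
              (1 + ((j:ℝ) * τ) ^ (-(1/2):ℝ)) * Real.exp (-(lam * τ * j)) := by
          rw [Finset.mul_sum]
          refine Finset.sum_nbij' (fun k => n - k) (fun j => n - j) ?_ ?_ ?_ ?_ ?_
          · intro k hk; simp only [Finset.mem_Icc] at *; omega
          · intro j hj; simp only [Finset.mem_Icc] at *; omega
          · intro k hk; simp only [Finset.mem_Icc] at hk; show n - (n - k) = k; omega
          · intro j hj; simp only [Finset.mem_Icc] at hj; show n - (n - j) = j; omega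
          · intro k hk
            simp only [Finset.mem_Icc] at hk
            have hkn : k ≤ n := by omega
            have hnnk : n - (n - k) = k := by omega
            have hcast : ((n - k : ℕ) : ℝ) = (n:ℝ) - (k:ℝ) := by
              push_cast [Nat.cast_sub hkn]; ring
            have hexp : Real.exp (lam * (k * τ))
                = Real.exp (lam * (n * τ)) * Real.exp (-(lam * τ * ((n:ℝ) - k))) := by
              rw [← Real.exp_add]; congr 1; ring
            rw [hcast, hexp]
            ring
        have hK := dg_kernel C τ lam hC hτ hlamdef (n-1)
        have hE1 : (1:ℝ) ≤ Real.exp (lam * (n * τ)) := Real.one_le_exp (by positivity)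
        have h2bE : (0:ℝ) ≤ 2 * b * Real.exp (lam * (n * τ)) := by positivity
        calc a n ≤ b + C * τ * ∑ k ∈ Finset.Icc 1 (n-1),
              (1 + (((n - k : ℕ):ℝ) * τ) ^ (-(1/2):ℝ)) * a k := hstep
          _ ≤ b + C * τ * (∑ k ∈ Finset.Icc 1 (n-1), (1 + (((n - k : ℕ):ℝ) * τ) ^ (-(1/2):ℝ))
              * (2 * b * Real.exp (lam * (k * τ)))) :=
            add_le_add_right (mul_le_mul_of_nonneg_left hsum1 hCτ) b
          _ = b + (2 * b * Real.exp (lam * (n * τ)))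
              * (C * τ * ∑ j ∈ Finset.Icc 1 (n-1),
                (1 + ((j:ℝ) * τ) ^ (-(1/2):ℝ)) * Real.exp (-(lam * τ * j))) := by
            rw [hsum2]; ring
          _ ≤ b + (2 * b * Real.exp (lam * (n * τ))) * (1/2) :=
            add_le_add_right (mul_le_mul_of_nonneg_left hK h2bE) b
          _ = b + b * Real.exp (lam * (n * τ)) := by ring
          _ ≤ 2 * b * Real.exp (lam * (n * τ)) := by nlinarith
  intro n hn
  have h1 := key n hn
  have hnτ : (n:ℝ) * τ ≤ T := by
    refine le_trans ?_ hNT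
    have : (n:ℝ) ≤ (N:ℝ) := by exact_mod_cast hn
    nlinarith
  have hE : Real.exp (lam * (n * τ)) ≤ Real.exp (lam * T) := by
    apply Real.exp_le_exp.2
    nlinarith
  nlinarith [Real.exp_pos (lam * ((n:ℝ) * τ))]
end

section
/- Let X be a real Banach space, A a continuous linear operator on X, and g : X → X twice continuously Fréchet differentiable with g Lipschitz continuous and with globally bounded first and second derivatives. Let T > 0 and let u : [0, T] → X be twice continuously differentiable with u′(t) = −A u(t) + g(u(t)) for all t ∈ [0, T]. For τ > 0 define the scheme u_0 = u(0) and u_{n+1} = v_n + (τ/2)(g(v_n) − g(u_n)), where v_n = exp(−τ A) u_n + (∫_0^τ exp(−(τ−s)A) ds)·g(u_n). Then there exist constants C ≥ 0 and τ_0 > 0, independent of τ and n, such that ‖u_n − u(nτ)‖ ≤ Cτ² for all τ ∈ (0, τ_0] and all n ∈ ℕ with nτ ≤ T. -/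
open Set

section aux
variable {X : Type*} [NormedAddCommGroup X] [NormedSpace ℝ X] [CompleteSpace X]

lemma my_norm_pow_le (B : X →L[ℝ] X) (n : ℕ) : ‖B ^ n‖ ≤ ‖B‖ ^ n := by
  cases n with
  | zero => rw [pow_zero, pow_zero]; exact ContinuousLinearMap.norm_id_le (E := X) (𝕜 := ℝ)
  | succ n => exact norm_pow_le' B n.succ_pos

lemma my_norm_exp_le (B : X →L[ℝ] X) : ‖NormedSpace.exp B‖ ≤ Real.exp ‖B‖ := by
  rw [NormedSpace.exp_eq_tsum (𝕂 := ℝ)]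
  refine (norm_tsum_le_tsum_norm (NormedSpace.norm_expSeries_summable' B)).trans ?_
  rw [Real.exp_eq_exp_ℝ, NormedSpace.exp_eq_tsum (𝕂 := ℝ)]
  have hsum : Summable fun n : ℕ => ((n.factorial : ℝ))⁻¹ • ‖B‖ ^ n := by
    simpa using NormedSpace.expSeries_summable' (𝕂 := ℝ) ‖B‖
  refine Summable.tsum_le_tsum (fun n => ?_) (NormedSpace.norm_expSeries_summable' B) hsum
  rw [norm_smul]
  simp only [norm_inv, Real.norm_natCast, smul_eq_mul]
  gcongr
  exact my_norm_pow_le B n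

lemma hasDerivAt_expE (A : X →L[ℝ] X) (σ : ℝ) :
    HasDerivAt (fun s : ℝ => NormedSpace.exp (-(s • A)))
      (-(NormedSpace.exp (-(σ • A)) * A)) σ := by
  have h := hasDerivAt_exp_smul_const (𝕂 := ℝ) (-A) σ
  simpa only [smul_neg, mul_neg] using h

lemma norm_expE_le (A : X →L[ℝ] X) {σ : ℝ} (h : 0 ≤ σ) :
    ‖NormedSpace.exp (-(σ • A))‖ ≤ Real.exp (σ * ‖A‖) := by
  refine (my_norm_exp_le _).trans ?_
  rw [Real.exp_le_exp, norm_neg]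
  exact (norm_smul_le σ A).trans (by rw [Real.norm_eq_abs, abs_of_nonneg h])

lemma norm_expE_sub_one_le (A : X →L[ℝ] X) {σ : ℝ} (h : 0 ≤ σ) :
    ‖NormedSpace.exp (-(σ • A)) - 1‖ ≤ σ * ‖A‖ * Real.exp (σ * ‖A‖) := by
  have hmvt := Convex.norm_image_sub_le_of_norm_hasDerivWithin_le
    (f := fun s : ℝ => NormedSpace.exp (-(s • A)))
    (f' := fun s : ℝ => -(NormedSpace.exp (-(s • A)) * A))
    (s := Icc (0:ℝ) σ) (C := ‖A‖ * Real.exp (σ * ‖A‖))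
    (fun x _ => (hasDerivAt_expE A x).hasDerivWithinAt)
    (fun x hx => ?_) (convex_Icc 0 σ) (left_mem_Icc.2 h) (right_mem_Icc.2 h)
  · calc ‖NormedSpace.exp (-(σ • A)) - 1‖
        = ‖NormedSpace.exp (-(σ • A)) - NormedSpace.exp (-((0:ℝ) • A))‖ := by
          simp [NormedSpace.exp_zero]
      _ ≤ ‖A‖ * Real.exp (σ * ‖A‖) * ‖σ - 0‖ := hmvt
      _ = σ * ‖A‖ * Real.exp (σ * ‖A‖) := by
          rw [Real.norm_eq_abs, sub_zero, abs_of_nonneg h]; ring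
  · rw [norm_neg]
    refine (norm_mul_le _ _).trans ?_
    have h1 := norm_expE_le A hx.1
    have hexp : Real.exp (x * ‖A‖) ≤ Real.exp (σ * ‖A‖) := by
      apply Real.exp_le_exp.2; exact mul_le_mul_of_nonneg_right hx.2 (norm_nonneg _)
    calc ‖NormedSpace.exp (-(x • A))‖ * ‖A‖ ≤ Real.exp (σ * ‖A‖) * ‖A‖ :=
          mul_le_mul_of_nonneg_right (h1.trans hexp) (norm_nonneg _)
      _ = ‖A‖ * Real.exp (σ * ‖A‖) := by ring

lemma norm_expE_sub_one_add_le (A : X →L[ℝ] X) {σ : ℝ} (h : 0 ≤ σ) :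
    ‖NormedSpace.exp (-(σ • A)) - 1 + σ • A‖ ≤ σ^2 * ‖A‖^2 * Real.exp (σ * ‖A‖) := by
  have hd : ∀ x : ℝ, HasDerivAt (fun s : ℝ => NormedSpace.exp (-(s • A)) + s • A)
      (-((NormedSpace.exp (-(x • A)) - 1) * A)) x := by
    intro x
    have h1 := (hasDerivAt_expE A x).fun_add ((hasDerivAt_id x).smul_const A)
    refine h1.congr_deriv ?_
    simp only [sub_mul, one_mul, one_smul, neg_sub]
    abel
  have hmvt := Convex.norm_image_sub_le_of_norm_hasDerivWithin_le
    (f := fun s : ℝ => NormedSpace.exp (-(s • A)) + s • A)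
    (f' := fun x : ℝ => -((NormedSpace.exp (-(x • A)) - 1) * A))
    (s := Icc (0:ℝ) σ) (C := σ * ‖A‖ ^ 2 * Real.exp (σ * ‖A‖))
    (fun x _ => (hd x).hasDerivWithinAt) (fun x hx => ?_) (convex_Icc 0 σ)
    (left_mem_Icc.2 h) (right_mem_Icc.2 h)
  · calc ‖NormedSpace.exp (-(σ • A)) - 1 + σ • A‖
        = ‖(NormedSpace.exp (-(σ • A)) + σ • A) -
            (NormedSpace.exp (-((0:ℝ) • A)) + (0:ℝ) • A)‖ := by
          simp [NormedSpace.exp_zero]; abel_nf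
      _ ≤ σ * ‖A‖ ^ 2 * Real.exp (σ * ‖A‖) * ‖σ - 0‖ := hmvt
      _ = σ^2 * ‖A‖^2 * Real.exp (σ * ‖A‖) := by
          rw [Real.norm_eq_abs, sub_zero, abs_of_nonneg h]; ring
  · rw [norm_neg]
    refine (norm_mul_le _ _).trans ?_
    have h1 := norm_expE_sub_one_le A hx.1
    have hexp : Real.exp (x * ‖A‖) ≤ Real.exp (σ * ‖A‖) := by
      apply Real.exp_le_exp.2; exact mul_le_mul_of_nonneg_right hx.2 (norm_nonneg _)
    calc ‖NormedSpace.exp (-(x • A)) - 1‖ * ‖A‖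
        ≤ (x * ‖A‖ * Real.exp (x * ‖A‖)) * ‖A‖ :=
          mul_le_mul_of_nonneg_right h1 (norm_nonneg _)
      _ ≤ (σ * ‖A‖ * Real.exp (σ * ‖A‖)) * ‖A‖ := by
          have : x * ‖A‖ * Real.exp (x * ‖A‖) ≤ σ * ‖A‖ * Real.exp (σ * ‖A‖) :=
            mul_le_mul (mul_le_mul_of_nonneg_right hx.2 (norm_nonneg _)) hexp
              (Real.exp_pos _).le (by positivity)
          exact mul_le_mul_of_nonneg_right this (norm_nonneg _)
      _ = σ * ‖A‖ ^ 2 * Real.exp (σ * ‖A‖) := by ring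

lemma continuous_expE (A : X →L[ℝ] X) : Continuous fun s : ℝ => NormedSpace.exp (-(s • A)) :=
  continuous_iff_continuousAt.2 fun s => (hasDerivAt_expE A s).continuousAt

lemma voc (A : X →L[ℝ] X) {g : X → X} (hgc : Continuous g) {T : ℝ} {u : ℝ → X}
    (hu : ∀ t ∈ Icc (0:ℝ) T, HasDerivWithinAt u (-(A (u t)) + g (u t)) (Icc (0:ℝ) T) t)
    {t τ : ℝ} (ht0 : 0 ≤ t) (hτ : 0 ≤ τ) (htT : t + τ ≤ T) :
    u (t + τ) = NormedSpace.exp (-(τ • A)) (u t)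
      + ∫ s in (0:ℝ)..τ, NormedSpace.exp (-((τ - s) • A)) (g (u (t + s))) := by
  set E : ℝ → (X →L[ℝ] X) := fun σ => NormedSpace.exp (-(σ • A)) with hE
  have hmaps : MapsTo (fun s : ℝ => t + s) (Icc (0:ℝ) τ) (Icc (0:ℝ) T) := by
    intro s hs
    show t + s ∈ Icc (0:ℝ) T
    exact ⟨by linarith [hs.1], by linarith [hs.2]⟩
  have hc : ∀ s : ℝ, HasDerivAt (fun s : ℝ => E (τ - s)) (E (τ - s) * A) s := by
    intro s
    have h1 := (hasDerivAt_expE A (τ - s)).scomp s ((hasDerivAt_id s).const_sub τ)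
    simpa [Function.comp_def] using h1
  have hus : ∀ s ∈ Icc (0:ℝ) τ, HasDerivWithinAt (fun s : ℝ => u (t + s))
      (-(A (u (t + s))) + g (u (t + s))) (Icc (0:ℝ) τ) s := by
    intro s hs
    have h1 := (hu (t + s) (hmaps hs)).scomp s
      (((hasDerivAt_id s).const_add t).hasDerivWithinAt) hmaps
    simpa [Function.comp_def] using h1
  have hF : ∀ s ∈ Icc (0:ℝ) τ,
      HasDerivWithinAt (fun s : ℝ => E (τ - s) (u (t + s)))
        (E (τ - s) (g (u (t + s)))) (Icc (0:ℝ) τ) s := by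
    intro s hs
    have h1 := ((hc s).hasDerivWithinAt).clm_apply (hus s hs)
    convert h1 using 1
    simp only [ContinuousLinearMap.mul_apply, map_add, map_neg]
    abel
  have hcu : ContinuousOn u (Icc (0:ℝ) T) := fun σ hσ => (hu σ hσ).continuousWithinAt
  have hcontF : ContinuousOn (fun s : ℝ => E (τ - s) (g (u (t + s)))) (Icc (0:ℝ) τ) := by
    apply ContinuousOn.clm_apply
    · exact ((continuous_expE A).comp (continuous_const.sub continuous_id)).continuousOn
    · exact hgc.comp_continuousOn
        (hcu.comp ((continuous_const.add continuous_id).continuousOn) hmaps)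
  have hint : IntervalIntegrable (fun s : ℝ => E (τ - s) (g (u (t + s))))
      MeasureTheory.volume 0 τ := by
    apply ContinuousOn.intervalIntegrable
    rwa [uIcc_of_le hτ]
  have hftc := intervalIntegral.integral_eq_sub_of_hasDeriv_right_of_le hτ
    (fun s hs => (hF s hs).continuousWithinAt)
    (fun s hs => ((hF s (Ioo_subset_Icc_self hs)).hasDerivAt
      (Icc_mem_nhds hs.1 hs.2)).hasDerivWithinAt)
    hint
  have hFτ : E (τ - τ) (u (t + τ)) = u (t + τ) := by
    simp [hE, NormedSpace.exp_zero]
  have hF0 : E (τ - 0) (u (t + 0)) = E τ (u t) := by norm_num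
  rw [hftc, hFτ, hF0]
  abel

lemma fderiv2_bound {g : X → X} {K₂ : ℝ}
    (hg2 : ∀ x, ‖iteratedFDeriv ℝ 2 g x‖ ≤ K₂) (z : X) :
    ‖fderiv ℝ (fderiv ℝ g) z‖ ≤ K₂ := by
  have hK₂ : 0 ≤ K₂ := (norm_nonneg _).trans (hg2 0)
  refine ContinuousLinearMap.opNorm_le_bound _ hK₂ fun x => ?_
  rw [show K₂ * ‖x‖ = ‖x‖ * K₂ by ring]
  have hx : 0 ≤ ‖x‖ * K₂ := by positivity
  refine ContinuousLinearMap.opNorm_le_bound _ hx fun y => ?_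
  have h1 : fderiv ℝ (fderiv ℝ g) z x y = iteratedFDeriv ℝ 2 g z ![x, y] := by
    rw [iteratedFDeriv_two_apply]
    norm_num
  rw [h1]
  calc ‖iteratedFDeriv ℝ 2 g z ![x, y]‖ ≤ ‖iteratedFDeriv ℝ 2 g z‖ * ∏ i, ‖(![x, y]) i‖ :=
        ContinuousMultilinearMap.le_opNorm _ _
    _ = ‖iteratedFDeriv ℝ 2 g z‖ * (‖x‖ * ‖y‖) := by
        rw [Fin.prod_univ_two]; norm_num
    _ ≤ K₂ * (‖x‖ * ‖y‖) := mul_le_mul_of_nonneg_right (hg2 z) (by positivity)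
    _ = ‖x‖ * K₂ * ‖y‖ := by ring

lemma fderiv_g_lip {g : X → X} (hg : ContDiff ℝ 2 g) {K₂ : ℝ}
    (hg2 : ∀ x, ‖iteratedFDeriv ℝ 2 g x‖ ≤ K₂) (x y : X) :
    ‖fderiv ℝ g x - fderiv ℝ g y‖ ≤ K₂ * ‖x - y‖ := by
  have hdiff : ∀ z : X, DifferentiableAt ℝ (fderiv ℝ g) z := fun z =>
    ((hg.fderiv_right (m := 1) (by norm_num)).differentiable one_ne_zero) z
  exact convex_univ.norm_image_sub_le_of_norm_fderiv_le
    (fun z _ => hdiff z) (fun z _ => fderiv2_bound hg2 z) (mem_univ y) (mem_univ x)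

lemma my_norm_sub_le_of_mem_segment {a b x : X} (hx : x ∈ segment ℝ a b) :
    ‖x - a‖ ≤ ‖b - a‖ := by
  obtain ⟨p, q, hp, hq, hpq, rfl⟩ := hx
  have hxa : p • a + q • b - a = q • (b - a) := by
    have hp1 : p = 1 - q := by linarith
    rw [hp1, smul_sub, sub_smul, one_smul]
    abel
  rw [hxa, norm_smul, Real.norm_eq_abs, abs_of_nonneg hq]
  nlinarith [norm_nonneg (b - a)]

lemma taylor_g {g : X → X} (hg : ContDiff ℝ 2 g) {K₂ : ℝ}
    (hg2 : ∀ x, ‖iteratedFDeriv ℝ 2 g x‖ ≤ K₂) (a b : X) :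
    ‖g b - g a - fderiv ℝ g a (b - a)‖ ≤ K₂ * ‖b - a‖ ^ 2 := by
  have hgd : Differentiable ℝ g := hg.differentiable (by norm_num)
  set φ : X → X := fun x => g x - fderiv ℝ g a x with hφ
  have hφd : ∀ x : X, DifferentiableAt ℝ φ x := fun x =>
    (hgd x).sub ((fderiv ℝ g a).differentiableAt)
  have hφf : ∀ x : X, fderiv ℝ φ x = fderiv ℝ g x - fderiv ℝ g a := by
    intro x
    rw [hφ, fderiv_fun_sub (hgd x) ((fderiv ℝ g a).differentiableAt), (fderiv ℝ g a).fderiv]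
  have hseg : ∀ x ∈ segment ℝ a b, ‖fderiv ℝ φ x‖ ≤ K₂ * ‖b - a‖ := by
    intro x hx
    rw [hφf]
    exact (fderiv_g_lip hg hg2 x a).trans
      (mul_le_mul_of_nonneg_left (my_norm_sub_le_of_mem_segment hx) ((norm_nonneg _).trans (hg2 0)))
  have h2 := (convex_segment a b).norm_image_sub_le_of_norm_fderiv_le
    (fun x _ => hφd x) hseg (left_mem_segment ℝ a b) (right_mem_segment ℝ a b)
  have hφab : φ b - φ a = g b - g a - fderiv ℝ g a (b - a) := by
    simp only [hφ, map_sub]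
    abel
  rw [hφab] at h2
  calc ‖g b - g a - fderiv ℝ g a (b - a)‖ ≤ K₂ * ‖b - a‖ * ‖b - a‖ := h2
    _ = K₂ * ‖b - a‖ ^ 2 := by ring

end aux
set_option maxHeartbeats 4000000 in
theorem predictor_corrector_second_order_convergence
    {X : Type*} [NormedAddCommGroup X] [NormedSpace ℝ X] [CompleteSpace X]
    (A : X →L[ℝ] X) (g : X → X) (hg : ContDiff ℝ 2 g)
    (L : NNReal) (hgLip : LipschitzWith L g)
    (K₁ K₂ : ℝ)
    (hg1 : ∀ x : X, ‖fderiv ℝ g x‖ ≤ K₁)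
    (hg2 : ∀ x : X, ‖iteratedFDeriv ℝ 2 g x‖ ≤ K₂)
    (T : ℝ) (hT : 0 < T) (u : ℝ → X)
    (hu2 : ContDiffOn ℝ 2 u (Set.Icc (0:ℝ) T))
    (hu : ∀ t ∈ Set.Icc (0:ℝ) T,
      HasDerivWithinAt u (-(A (u t)) + g (u t)) (Set.Icc (0:ℝ) T) t) :
    ∃ C : ℝ, 0 ≤ C ∧ ∃ τ₀ : ℝ, 0 < τ₀ ∧
      ∀ (τ : ℝ), 0 < τ → τ ≤ τ₀ →
        ∀ useq : ℕ → X, useq 0 = u 0 →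
          (∀ n : ℕ, useq (n + 1) =
            ((NormedSpace.exp (-(τ • A))) (useq n) +
              (∫ s : ℝ in (0:ℝ)..τ, NormedSpace.exp (-((τ - s) • A))) (g (useq n))) +
            (τ / 2) • (g ((NormedSpace.exp (-(τ • A))) (useq n) +
              (∫ s : ℝ in (0:ℝ)..τ, NormedSpace.exp (-((τ - s) • A))) (g (useq n)))
              - g (useq n))) →
          ∀ n : ℕ, (n : ℝ) * τ ≤ T → ‖useq n - u ((n : ℝ) * τ)‖ ≤ C * τ ^ 2 := by
  classical
  have hK₁0 : 0 ≤ K₁ := (norm_nonneg _).trans (hg1 0)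
  have hK₂0 : 0 ≤ K₂ := (norm_nonneg _).trans (hg2 0)
  have hL0 : 0 ≤ (L:ℝ) := L.coe_nonneg
  have hgc : Continuous g := hg.continuous
  have hgd : Differentiable ℝ g := hg.differentiable (by norm_num)
  have hgl : ∀ x y : X, ‖g x - g y‖ ≤ (L:ℝ) * ‖x - y‖ := fun x y => by
    simpa [dist_eq_norm] using hgLip.dist_le_mul x y
  have hcu : ContinuousOn u (Icc (0:ℝ) T) := fun σ hσ => (hu σ hσ).continuousWithinAt
  obtain ⟨M₀', hM₀'⟩ := isCompact_Icc.exists_bound_of_continuousOn hcu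
  set M₀ : ℝ := max M₀' 0 with hM₀def
  have hM₀0 : (0:ℝ) ≤ M₀ := le_max_right _ _
  have hM₀ : ∀ σ ∈ Icc (0:ℝ) T, ‖u σ‖ ≤ M₀ := fun σ hσ => (hM₀' σ hσ).trans (le_max_left _ _)
  have ha0 : (0:ℝ) ≤ ‖A‖ := norm_nonneg _
  set eA : ℝ := Real.exp ‖A‖ with heA
  have heA1 : 1 ≤ eA := by
    have := Real.add_one_le_exp ‖A‖
    rw [heA]; linarith
  have heA0 : 0 < eA := lt_of_lt_of_le one_pos heA1
  set Mg : ℝ := ‖g 0‖ + (L:ℝ) * M₀ with hMgdef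
  have hMg0 : 0 ≤ Mg := by rw [hMgdef]; positivity
  have hMg : ∀ σ ∈ Icc (0:ℝ) T, ‖g (u σ)‖ ≤ Mg := by
    intro σ hσ
    calc ‖g (u σ)‖ = ‖(g (u σ) - g 0) + g 0‖ := by rw [sub_add_cancel]
      _ ≤ ‖g (u σ) - g 0‖ + ‖g 0‖ := norm_add_le _ _
      _ ≤ (L:ℝ) * ‖u σ - 0‖ + ‖g 0‖ := by gcongr; exact hgl _ _
      _ ≤ (L:ℝ) * M₀ + ‖g 0‖ := by
          gcongr
          rw [sub_zero]; exact hM₀ σ hσ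
      _ = Mg := by rw [hMgdef]; ring
  set du : ℝ → X := fun σ => -(A (u σ)) + g (u σ) with hdudef
  set M₁ : ℝ := ‖A‖ * M₀ + Mg with hM₁def
  have hM₁0 : 0 ≤ M₁ := by rw [hM₁def]; positivity
  have hdu : ∀ σ ∈ Icc (0:ℝ) T, ‖du σ‖ ≤ M₁ := by
    intro σ hσ
    calc ‖du σ‖ ≤ ‖A (u σ)‖ + ‖g (u σ)‖ := by
          rw [hdudef]; exact (norm_add_le _ _).trans (by rw [norm_neg])
      _ ≤ ‖A‖ * M₀ + Mg := by
          gcongr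
          · exact (A.le_opNorm _).trans (by gcongr; exact hM₀ σ hσ)
          · exact hMg σ hσ
  have huLip : ∀ p ∈ Icc (0:ℝ) T, ∀ q ∈ Icc (0:ℝ) T, ‖u q - u p‖ ≤ M₁ * |q - p| := by
    intro p hp q hq
    have := (convex_Icc (0:ℝ) T).norm_image_sub_le_of_norm_hasDerivWithin_le
      (f' := du) hu hdu hp hq
    rwa [Real.norm_eq_abs] at this
  set w'f : ℝ → X := fun σ => fderiv ℝ g (u σ) (du σ) with hw'def
  have hduLip : ∀ p ∈ Icc (0:ℝ) T, ∀ q ∈ Icc (0:ℝ) T,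
      ‖du q - du p‖ ≤ (‖A‖ + (L:ℝ)) * (M₁ * |q - p|) := by
    intro p hp q hq
    have h1 : du q - du p = -(A (u q - u p)) + (g (u q) - g (u p)) := by
      rw [hdudef]; simp only [map_sub]; abel
    rw [h1]
    calc ‖-(A (u q - u p)) + (g (u q) - g (u p))‖
        ≤ ‖A (u q - u p)‖ + ‖g (u q) - g (u p)‖ := (norm_add_le _ _).trans (by rw [norm_neg])
      _ ≤ ‖A‖ * ‖u q - u p‖ + (L:ℝ) * ‖u q - u p‖ := add_le_add (A.le_opNorm _) (hgl _ _)
      _ = (‖A‖ + (L:ℝ)) * ‖u q - u p‖ := by ring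
      _ ≤ (‖A‖ + (L:ℝ)) * (M₁ * |q - p|) :=
          mul_le_mul_of_nonneg_left (huLip p hp q hq) (by positivity)
  set Mw : ℝ := K₂ * M₁ * M₁ + K₁ * ((‖A‖ + (L:ℝ)) * M₁) with hMwdef
  have hMw0 : 0 ≤ Mw := by rw [hMwdef]; positivity
  have hw'Lip : ∀ p ∈ Icc (0:ℝ) T, ∀ q ∈ Icc (0:ℝ) T,
      ‖w'f q - w'f p‖ ≤ Mw * |q - p| := by
    intro p hp q hq
    have h1 : w'f q - w'f p
        = (fderiv ℝ g (u q) - fderiv ℝ g (u p)) (du q) + fderiv ℝ g (u p) (du q - du p) := by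
      rw [hw'def]
      simp only [ContinuousLinearMap.sub_apply, map_sub]
      abel
    rw [h1]
    calc ‖(fderiv ℝ g (u q) - fderiv ℝ g (u p)) (du q) + fderiv ℝ g (u p) (du q - du p)‖
        ≤ ‖(fderiv ℝ g (u q) - fderiv ℝ g (u p)) (du q)‖ + ‖fderiv ℝ g (u p) (du q - du p)‖ :=
          norm_add_le _ _
      _ ≤ (K₂ * ‖u q - u p‖) * ‖du q‖ + K₁ * ‖du q - du p‖ := by
          gcongr
          · exact ((fderiv ℝ g (u q) - fderiv ℝ g (u p)).le_opNorm _).trans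
              (by gcongr; exact fderiv_g_lip hg hg2 (u q) (u p))
          · exact ((fderiv ℝ g (u p)).le_opNorm _).trans (by gcongr; exact hg1 _)
      _ ≤ (K₂ * (M₁ * |q - p|)) * M₁ + K₁ * ((‖A‖ + (L:ℝ)) * (M₁ * |q - p|)) := by
          refine add_le_add ?_ (mul_le_mul_of_nonneg_left (hduLip p hp q hq) hK₁0)
          exact mul_le_mul (mul_le_mul_of_nonneg_left (huLip p hp q hq) hK₂0)
            (hdu q hq) (norm_nonneg _) (by positivity)
      _ = Mw * |q - p| := by rw [hMwdef]; ring
  have hw : ∀ σ ∈ Icc (0:ℝ) T,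
      HasDerivWithinAt (fun σ => g (u σ)) (w'f σ) (Icc (0:ℝ) T) σ := fun σ hσ =>
    (hgd (u σ)).hasFDerivAt.comp_hasDerivWithinAt σ (hu σ hσ)
  set c₂ : ℝ := ‖A‖^2 * eA * M₀ + ‖A‖ * eA * Mg with hc₂def
  have hc₂0 : 0 ≤ c₂ := by rw [hc₂def]; positivity
  set c₃ : ℝ := c₂ + M₁ with hc₃def
  have hc₃0 : 0 ≤ c₃ := by rw [hc₃def]; positivity
  set C₀ : ℝ := ‖A‖ * eA * ((L:ℝ) * M₁) + Mw + (K₂ * c₃^2 + K₁ * c₂) / 2 with hC₀def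
  have hC₀0 : 0 ≤ C₀ := by rw [hC₀def]; positivity
  set cv : ℝ := ‖A‖ * eA + eA * (L:ℝ) with hcvdef
  have hcv0 : 0 ≤ cv := by rw [hcvdef]; positivity
  set cs : ℝ := cv + (L:ℝ) * (2 + cv) / 2 with hcsdef
  have hcs0 : 0 ≤ cs := by rw [hcsdef]; positivity
  refine ⟨C₀ * T * Real.exp (cs * T), by positivity, 1, one_pos, ?_⟩
  intro τ hτ0 hτ1 useq h0 hrec
  have hτ0' : (0:ℝ) ≤ τ := hτ0.le
  -- facts about the operator integral
  have cE : Continuous (fun s : ℝ => NormedSpace.exp (-((τ - s) • A))) :=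
    (continuous_expE A).comp (continuous_const.sub continuous_id)
  have hQint : IntervalIntegrable (fun s : ℝ => NormedSpace.exp (-((τ - s) • A)))
      MeasureTheory.volume 0 τ := cE.intervalIntegrable 0 τ
  set Q : X →L[ℝ] X := ∫ s : ℝ in (0:ℝ)..τ, NormedSpace.exp (-((τ - s) • A)) with hQdef
  have hQapp : ∀ x : X, Q x = ∫ s : ℝ in (0:ℝ)..τ, NormedSpace.exp (-((τ - s) • A)) x :=
    fun x => ContinuousLinearMap.intervalIntegral_apply hQint x
  have hfac : ∀ s ∈ Icc (0:ℝ) τ, (τ - s) * ‖A‖ ≤ ‖A‖ := by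
    intro s hs
    nlinarith [mul_nonneg (by linarith [hs.2, hs.1] : (0:ℝ) ≤ 1 - (τ - s)) ha0]
  have hEb : ∀ s ∈ Icc (0:ℝ) τ, ‖NormedSpace.exp (-((τ - s) • A))‖ ≤ eA := by
    intro s hs
    refine (norm_expE_le A (by linarith [hs.2] : (0:ℝ) ≤ τ - s)).trans ?_
    rw [heA, Real.exp_le_exp]
    exact hfac s hs
  have hE1b : ∀ s ∈ Icc (0:ℝ) τ, ‖NormedSpace.exp (-((τ - s) • A)) - 1‖
      ≤ τ * (‖A‖ * eA) := by
    intro s hs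
    refine (norm_expE_sub_one_le A (by linarith [hs.2] : (0:ℝ) ≤ τ - s)).trans ?_
    have h1 : Real.exp ((τ - s) * ‖A‖) ≤ eA := by
      rw [heA, Real.exp_le_exp]
      exact hfac s hs
    have h2 : (0:ℝ) ≤ (τ - s) * ‖A‖ := mul_nonneg (by linarith [hs.2]) ha0
    calc (τ - s) * ‖A‖ * Real.exp ((τ - s) * ‖A‖) ≤ (τ - s) * ‖A‖ * eA :=
          mul_le_mul_of_nonneg_left h1 h2
      _ ≤ τ * ‖A‖ * eA := by
          have h3 : τ - s ≤ τ := by linarith [hs.1]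
          exact mul_le_mul_of_nonneg_right (mul_le_mul_of_nonneg_right h3 ha0) heA0.le
      _ = τ * (‖A‖ * eA) := by ring
  have hQnorm : ‖Q‖ ≤ eA * τ := by
    rw [hQdef]
    have := intervalIntegral.norm_integral_le_of_norm_le_const
      (C := eA) (f := fun s : ℝ => NormedSpace.exp (-((τ - s) • A))) (a := 0) (b := τ) ?_
    · rwa [sub_zero, abs_of_pos hτ0] at this
    · intro s hs
      rw [uIoc_of_le hτ0'] at hs
      exact hEb s (Ioc_subset_Icc_self hs)
  set Φ : X → X := fun x =>
    ((NormedSpace.exp (-(τ • A))) x + Q (g x)) +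
      (τ / 2) • (g ((NormedSpace.exp (-(τ • A))) x + Q (g x)) - g x) with hΦdef
  have hrec' : ∀ n : ℕ, useq (n + 1) = Φ (useq n) := fun n => hrec n
  -- stability
  have hEτ1 : ‖NormedSpace.exp (-(τ • A)) - 1‖ ≤ τ * (‖A‖ * eA) := by
    have := hE1b 0 (left_mem_Icc.2 hτ0')
    simpa using this
  have hstab : ∀ x y : X, ‖Φ x - Φ y‖ ≤ (1 + cs * τ) * ‖x - y‖ := by
    intro x y
    set vx : X := (NormedSpace.exp (-(τ • A))) x + Q (g x) with hvx
    set vy : X := (NormedSpace.exp (-(τ • A))) y + Q (g y) with hvy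
    have hv : ‖vx - vy‖ ≤ (1 + cv * τ) * ‖x - y‖ := by
      have h1 : vx - vy = ((NormedSpace.exp (-(τ • A)) - 1) (x - y) + (x - y)) +
          Q (g x - g y) := by
        rw [hvx, hvy]
        simp only [ContinuousLinearMap.sub_apply, ContinuousLinearMap.one_apply, map_sub]
        abel
      rw [h1]
      calc ‖((NormedSpace.exp (-(τ • A)) - 1) (x - y) + (x - y)) + Q (g x - g y)‖
          ≤ ‖(NormedSpace.exp (-(τ • A)) - 1) (x - y)‖ + ‖x - y‖ + ‖Q (g x - g y)‖ :=
            (norm_add_le _ _).trans (by gcongr; exact norm_add_le _ _)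
        _ ≤ (τ * (‖A‖ * eA)) * ‖x - y‖ + ‖x - y‖ + (eA * τ) * ((L:ℝ) * ‖x - y‖) := by
            gcongr
            · exact ((NormedSpace.exp (-(τ • A)) - 1).le_opNorm _).trans
                (mul_le_mul_of_nonneg_right hEτ1 (norm_nonneg _))
            · exact (Q.le_opNorm _).trans
                (mul_le_mul hQnorm (hgl x y) (norm_nonneg _) (by positivity))
        _ = (1 + cv * τ) * ‖x - y‖ := by rw [hcvdef]; ring
    have hΦxy : Φ x - Φ y = (vx - vy) + (τ/2) • ((g vx - g vy) - (g x - g y)) := by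
      rw [hΦdef]
      simp only [← hvx, ← hvy, smul_sub]
      abel
    rw [hΦxy]
    have hvv : ‖g vx - g vy‖ ≤ (L:ℝ) * ((1 + cv) * ‖x - y‖) := by
      refine (hgl _ _).trans ?_
      refine mul_le_mul_of_nonneg_left (hv.trans ?_) hL0
      refine mul_le_mul_of_nonneg_right ?_ (norm_nonneg _)
      have : cv * τ ≤ cv := mul_le_of_le_one_right hcv0 hτ1
      linarith
    calc ‖(vx - vy) + (τ/2) • ((g vx - g vy) - (g x - g y))‖
        ≤ ‖vx - vy‖ + (τ/2) * ‖(g vx - g vy) - (g x - g y)‖ := by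
          refine (norm_add_le _ _).trans ?_
          gcongr
          rw [norm_smul, Real.norm_eq_abs, abs_of_nonneg (by positivity)]
      _ ≤ (1 + cv * τ) * ‖x - y‖ +
          (τ/2) * ((L:ℝ) * ((1 + cv) * ‖x - y‖) + (L:ℝ) * ‖x - y‖) := by
          gcongr
          exact (norm_sub_le _ _).trans (add_le_add hvv (hgl _ _))
      _ = (1 + cs * τ) * ‖x - y‖ := by rw [hcsdef]; ring
  -- local error estimate
  have hmain : ∀ t : ℝ, 0 ≤ t → t + τ ≤ T → ‖Φ (u t) - u (t + τ)‖ ≤ C₀ * τ^3 := by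
    intro t ht0 htT
    have ht : t ∈ Icc (0:ℝ) T := ⟨ht0, by linarith⟩
    have hmaps : MapsTo (fun s : ℝ => t + s) (Icc (0:ℝ) τ) (Icc (0:ℝ) T) := by
      intro s hs
      show t + s ∈ Icc (0:ℝ) T
      exact ⟨by linarith [hs.1], by linarith [hs.2]⟩
    have hvoc := voc A hgc hu ht0 hτ0' htT
    set v : X := (NormedSpace.exp (-(τ • A))) (u t) + Q (g (u t)) with hvdef
    have hcont_us : ContinuousOn (fun s : ℝ => u (t+s)) (Icc (0:ℝ) τ) :=
      hcu.comp ((continuous_const.add continuous_id).continuousOn) hmaps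
    have hcont_gus : ContinuousOn (fun s : ℝ => g (u (t+s))) (Icc (0:ℝ) τ) :=
      hgc.comp_continuousOn hcont_us
    have cE' : ContinuousOn (fun s : ℝ => NormedSpace.exp (-((τ - s) • A)))
        (Icc (0:ℝ) τ) := cE.continuousOn
    have hiA : IntervalIntegrable
        (fun s : ℝ => NormedSpace.exp (-((τ - s) • A)) (g (u (t+s))))
        MeasureTheory.volume 0 τ := by
      apply ContinuousOn.intervalIntegrable
      rw [uIcc_of_le hτ0']
      exact cE'.clm_apply hcont_gus
    have hi4 : IntervalIntegrable
        (fun s : ℝ => NormedSpace.exp (-((τ - s) • A)) (g (u t)))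
        MeasureTheory.volume 0 τ := by
      apply ContinuousOn.intervalIntegrable
      rw [uIcc_of_le hτ0']
      exact cE'.clm_apply continuousOn_const
    have hih : IntervalIntegrable (fun s : ℝ => g (u (t+s)) - g (u t))
        MeasureTheory.volume 0 τ := by
      apply ContinuousOn.intervalIntegrable
      rw [uIcc_of_le hτ0']
      exact hcont_gus.sub continuousOn_const
    have hi3 : IntervalIntegrable
        (fun s : ℝ => (NormedSpace.exp (-((τ - s) • A)) - 1) (g (u (t+s)) - g (u t)))
        MeasureTheory.volume 0 τ := by
      apply ContinuousOn.intervalIntegrable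
      rw [uIcc_of_le hτ0']
      exact (cE'.sub continuousOn_const).clm_apply (hcont_gus.sub continuousOn_const)
    have hi5 : IntervalIntegrable (fun s : ℝ => s • w'f t) MeasureTheory.volume 0 τ :=
      (continuous_id.smul continuous_const).intervalIntegrable 0 τ
    have hQgy : Q (g (u t)) = ∫ s in (0:ℝ)..τ, NormedSpace.exp (-((τ - s) • A)) (g (u t)) :=
      hQapp _
    have hsplit : (∫ s in (0:ℝ)..τ, NormedSpace.exp (-((τ - s) • A)) (g (u (t+s)))) - Q (g (u t))
        = ∫ s in (0:ℝ)..τ, NormedSpace.exp (-((τ - s) • A)) (g (u (t+s)) - g (u t)) := by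
      rw [hQgy, ← intervalIntegral.integral_sub hiA hi4]
      exact intervalIntegral.integral_congr fun s _ => (map_sub _ _ _).symm
    have hΦy : Φ (u t) = v + (τ/2) • (g v - g (u t)) := by
      simp only [hΦdef]
      rfl
    have hkey : Φ (u t) - u (t + τ) = (τ/2) • (g v - g (u t))
        - ∫ s in (0:ℝ)..τ, NormedSpace.exp (-((τ - s) • A)) (g (u (t+s)) - g (u t)) := by
      rw [hΦy, hvoc, ← hsplit, hvdef]
      abel
    -- bound P1
    have hP1 : ‖∫ s in (0:ℝ)..τ,
        (NormedSpace.exp (-((τ - s) • A)) - 1) (g (u (t+s)) - g (u t))‖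
        ≤ (‖A‖ * eA * ((L:ℝ) * M₁)) * τ^3 := by
      have hptw : ∀ s ∈ Set.uIoc (0:ℝ) τ,
          ‖(NormedSpace.exp (-((τ - s) • A)) - 1) (g (u (t+s)) - g (u t))‖
            ≤ (τ * (‖A‖ * eA)) * ((L:ℝ) * (M₁ * τ)) := by
        intro s hs
        rw [uIoc_of_le hτ0'] at hs
        have hsIcc : s ∈ Icc (0:ℝ) τ := Ioc_subset_Icc_self hs
        have hgub : ‖g (u (t+s)) - g (u t)‖ ≤ (L:ℝ) * (M₁ * τ) := by
          refine (hgl _ _).trans (mul_le_mul_of_nonneg_left ?_ hL0)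
          refine (huLip t ht (t+s) (hmaps hsIcc)).trans ?_
          rw [add_sub_cancel_left, abs_of_nonneg hsIcc.1]
          exact mul_le_mul_of_nonneg_left hsIcc.2 hM₁0
        exact ((NormedSpace.exp (-((τ - s) • A)) - 1).le_opNorm _).trans
          (mul_le_mul (hE1b s hsIcc) hgub (norm_nonneg _) (by positivity))
      have hb := intervalIntegral.norm_integral_le_of_norm_le_const hptw
      rw [sub_zero, abs_of_pos hτ0] at hb
      refine hb.trans (le_of_eq ?_)
      ring
    -- pointwise Taylor bound for g ∘ u
    have hψb : ∀ s ∈ Icc (0:ℝ) τ,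
        ‖(g (u (t+s)) - g (u t)) - s • w'f t‖ ≤ (Mw * τ) * τ := by
      intro s hs
      have hψd : ∀ σ ∈ Icc (0:ℝ) τ, HasDerivWithinAt (fun σ : ℝ => g (u (t+σ)) - σ • w'f t)
          (w'f (t+σ) - w'f t) (Icc (0:ℝ) τ) σ := by
        intro σ hσ
        have h1 := (hw (t+σ) (hmaps hσ)).scomp σ
          (((hasDerivAt_id σ).const_add t).hasDerivWithinAt) hmaps
        have h2 : HasDerivWithinAt (fun σ : ℝ => σ • w'f t) ((1:ℝ) • w'f t) (Icc (0:ℝ) τ) σ :=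
          ((hasDerivAt_id σ).smul_const (w'f t)).hasDerivWithinAt
        simpa using h1.fun_sub h2
      have hbd : ∀ σ ∈ Icc (0:ℝ) τ, ‖w'f (t+σ) - w'f t‖ ≤ Mw * τ := by
        intro σ hσ
        refine (hw'Lip t ht (t+σ) (hmaps hσ)).trans ?_
        rw [add_sub_cancel_left, abs_of_nonneg hσ.1]
        exact mul_le_mul_of_nonneg_left hσ.2 hMw0
      have hmvt := (convex_Icc (0:ℝ) τ).norm_image_sub_le_of_norm_hasDerivWithin_le hψd hbd
        (left_mem_Icc.2 hτ0') hs
      have heq : (g (u (t+s)) - s • w'f t) - (g (u (t+0)) - (0:ℝ) • w'f t)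
          = (g (u (t+s)) - g (u t)) - s • w'f t := by
        rw [add_zero, zero_smul]
        abel
      rw [heq] at hmvt
      refine hmvt.trans ?_
      rw [Real.norm_eq_abs, sub_zero, abs_of_nonneg hs.1]
      exact mul_le_mul_of_nonneg_left hs.2 (by positivity)
    have hsw : (∫ s in (0:ℝ)..τ, s • w'f t) = (τ^2/2) • w'f t := by
      rw [intervalIntegral.integral_smul_const]
      have hid : (∫ s in (0:ℝ)..τ, s) = (τ^2 - 0^2)/2 := by
        rw [show (fun s : ℝ => s) = id from rfl]
        exact integral_id
      rw [hid]
      norm_num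
    have hP2 : ‖(∫ s in (0:ℝ)..τ, (g (u (t+s)) - g (u t))) - (τ^2/2) • w'f t‖ ≤ Mw * τ^3 := by
      rw [← hsw, ← intervalIntegral.integral_sub hih hi5]
      have hptw : ∀ s ∈ Set.uIoc (0:ℝ) τ,
          ‖(g (u (t+s)) - g (u t)) - s • w'f t‖ ≤ (Mw * τ) * τ := by
        intro s hs
        rw [uIoc_of_le hτ0'] at hs
        exact hψb s (Ioc_subset_Icc_self hs)
      have hb := intervalIntegral.norm_integral_le_of_norm_le_const hptw
      rw [sub_zero, abs_of_pos hτ0] at hb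
      refine hb.trans (le_of_eq ?_)
      ring
    -- bound on v - u t - τ • du t
    have hQc : Q (g (u t)) - τ • g (u t)
        = ∫ s in (0:ℝ)..τ, (NormedSpace.exp (-((τ - s) • A)) (g (u t)) - g (u t)) := by
      rw [intervalIntegral.integral_sub hi4 intervalIntegrable_const,
        intervalIntegral.integral_const, hQgy]
      norm_num
    have hexpτ : Real.exp (τ * ‖A‖) ≤ eA := by
      rw [heA, Real.exp_le_exp]
      exact mul_le_of_le_one_left ha0 hτ1
    have hvy2 : ‖v - u t - τ • du t‖ ≤ c₂ * τ^2 := by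
      have hid : v - u t - τ • du t
          = ((NormedSpace.exp (-(τ • A)) - 1 + τ • A) (u t)) + (Q (g (u t)) - τ • g (u t)) := by
        rw [hvdef]
        simp only [hdudef, ContinuousLinearMap.add_apply, ContinuousLinearMap.sub_apply,
          ContinuousLinearMap.one_apply, ContinuousLinearMap.smul_apply, smul_add, smul_neg]
        abel
      rw [hid]
      have hb1 : ‖(NormedSpace.exp (-(τ • A)) - 1 + τ • A) (u t)‖ ≤ (τ^2 * ‖A‖^2 * eA) * M₀ := by
        refine ((NormedSpace.exp (-(τ • A)) - 1 + τ • A).le_opNorm _).trans ?_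
        refine mul_le_mul ((norm_expE_sub_one_add_le A hτ0').trans ?_) (hM₀ t ht)
          (norm_nonneg _) (by positivity)
        exact mul_le_mul_of_nonneg_left hexpτ (by positivity)
      have hb2 : ‖Q (g (u t)) - τ • g (u t)‖ ≤ τ^2 * (‖A‖ * eA) * Mg := by
        rw [hQc]
        have hptw : ∀ s ∈ Set.uIoc (0:ℝ) τ,
            ‖NormedSpace.exp (-((τ - s) • A)) (g (u t)) - g (u t)‖
              ≤ τ * (‖A‖ * eA) * Mg := by
          intro s hs
          rw [uIoc_of_le hτ0'] at hs
          have hsIcc : s ∈ Icc (0:ℝ) τ := Ioc_subset_Icc_self hs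
          have h1 : NormedSpace.exp (-((τ - s) • A)) (g (u t)) - g (u t)
              = (NormedSpace.exp (-((τ - s) • A)) - 1) (g (u t)) := by
            simp [ContinuousLinearMap.sub_apply]
          rw [h1]
          exact ((NormedSpace.exp (-((τ - s) • A)) - 1).le_opNorm _).trans
            (mul_le_mul (hE1b s hsIcc) (hMg t ht) (norm_nonneg _) (by positivity))
        have hb := intervalIntegral.norm_integral_le_of_norm_le_const hptw
        rw [sub_zero, abs_of_pos hτ0] at hb
        refine hb.trans (le_of_eq ?_)
        ring
      refine (norm_add_le _ _).trans ((add_le_add hb1 hb2).trans (le_of_eq ?_))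
      rw [hc₂def]
      ring
    have hvy : ‖v - u t‖ ≤ c₃ * τ := by
      have hd : v - u t = (v - u t - τ • du t) + τ • du t := by abel
      rw [hd]
      have hττ : τ^2 ≤ τ := by
        calc τ^2 = τ*τ := sq τ
          _ ≤ 1*τ := mul_le_mul_of_nonneg_right hτ1 hτ0'
          _ = τ := one_mul τ
      refine (norm_add_le _ _).trans ?_
      have h2 : ‖τ • du t‖ ≤ τ * M₁ := by
        rw [norm_smul, Real.norm_eq_abs, abs_of_nonneg hτ0']
        exact mul_le_mul_of_nonneg_left (hdu t ht) hτ0'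
      have h3 : c₂ * τ^2 ≤ c₂ * τ := mul_le_mul_of_nonneg_left hττ hc₂0
      calc ‖v - u t - τ • du t‖ + ‖τ • du t‖ ≤ c₂ * τ^2 + τ * M₁ := add_le_add hvy2 h2
        _ ≤ c₂ * τ + τ * M₁ := add_le_add_left h3 _
        _ = c₃ * τ := by rw [hc₃def]; ring
    have hT1 : ‖g v - g (u t) - fderiv ℝ g (u t) (v - u t)‖ ≤ K₂ * (c₃^2 * τ^2) := by
      refine (taylor_g hg hg2 (u t) v).trans ?_
      refine mul_le_mul_of_nonneg_left ?_ hK₂0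
      have := pow_le_pow_left₀ (norm_nonneg (v - u t)) hvy 2
      calc ‖v - u t‖^2 ≤ (c₃ * τ)^2 := this
        _ = c₃^2 * τ^2 := by ring
    have hT2 : ‖fderiv ℝ g (u t) (v - u t - τ • du t)‖ ≤ K₁ * (c₂ * τ^2) :=
      ((fderiv ℝ g (u t)).le_opNorm _).trans
        (mul_le_mul (hg1 _) hvy2 (norm_nonneg _) hK₁0)
    have hgvid : g v - g (u t) - τ • w'f t
        = (g v - g (u t) - fderiv ℝ g (u t) (v - u t))
          + fderiv ℝ g (u t) (v - u t - τ • du t) := by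
      have h1 : fderiv ℝ g (u t) (v - u t)
          = fderiv ℝ g (u t) (v - u t - τ • du t) + τ • w'f t := by
        conv_lhs => rw [show v - u t = (v - u t - τ • du t) + τ • du t from by abel]
        rw [map_add, map_smul]
      rw [h1]
      abel
    have hB3 : ‖(τ/2) • (g v - g (u t) - τ • w'f t)‖
        ≤ ((K₂ * c₃^2 + K₁ * c₂)/2) * τ^3 := by
      rw [norm_smul, Real.norm_eq_abs, abs_of_nonneg (by positivity)]
      calc (τ/2) * ‖g v - g (u t) - τ • w'f t‖
          ≤ (τ/2) * (K₂ * (c₃^2 * τ^2) + K₁ * (c₂ * τ^2)) := by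
            refine mul_le_mul_of_nonneg_left ?_ (by positivity)
            rw [hgvid]
            exact (norm_add_le _ _).trans (add_le_add hT1 hT2)
        _ = ((K₂ * c₃^2 + K₁ * c₂)/2) * τ^3 := by ring
    have hfin : (τ/2) • (g v - g (u t))
        - (∫ s in (0:ℝ)..τ, NormedSpace.exp (-((τ - s) • A)) (g (u (t+s)) - g (u t)))
        = (τ/2) • (g v - g (u t) - τ • w'f t)
          - (∫ s in (0:ℝ)..τ, (NormedSpace.exp (-((τ - s) • A)) - 1) (g (u (t+s)) - g (u t)))
          - ((∫ s in (0:ℝ)..τ, (g (u (t+s)) - g (u t))) - (τ^2/2) • w'f t) := by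
      have hI : (∫ s in (0:ℝ)..τ, NormedSpace.exp (-((τ - s) • A)) (g (u (t+s)) - g (u t)))
          = (∫ s in (0:ℝ)..τ, (NormedSpace.exp (-((τ - s) • A)) - 1) (g (u (t+s)) - g (u t)))
            + ∫ s in (0:ℝ)..τ, (g (u (t+s)) - g (u t)) := by
        rw [← intervalIntegral.integral_add hi3 hih]
        refine intervalIntegral.integral_congr fun s _ => ?_
        simp [ContinuousLinearMap.sub_apply]
      have hsm : (τ/2) • (g v - g (u t) - τ • w'f t)
          = (τ/2) • (g v - g (u t)) - (τ^2/2) • w'f t := by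
        rw [smul_sub, smul_smul, show τ/2*τ = τ^2/2 from by ring]
      rw [hI, hsm]
      abel
    rw [hkey, hfin]
    calc ‖(τ/2) • (g v - g (u t) - τ • w'f t)
          - (∫ s in (0:ℝ)..τ, (NormedSpace.exp (-((τ - s) • A)) - 1) (g (u (t+s)) - g (u t)))
          - ((∫ s in (0:ℝ)..τ, (g (u (t+s)) - g (u t))) - (τ^2/2) • w'f t)‖
        ≤ ‖(τ/2) • (g v - g (u t) - τ • w'f t)‖
          + ‖∫ s in (0:ℝ)..τ, (NormedSpace.exp (-((τ - s) • A)) - 1) (g (u (t+s)) - g (u t))‖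
          + ‖(∫ s in (0:ℝ)..τ, (g (u (t+s)) - g (u t))) - (τ^2/2) • w'f t‖ := by
          exact (norm_sub_le _ _).trans (add_le_add (norm_sub_le _ _) le_rfl)
      _ ≤ ((K₂ * c₃^2 + K₁ * c₂)/2) * τ^3 + (‖A‖ * eA * ((L:ℝ) * M₁)) * τ^3 + Mw * τ^3 :=
          add_le_add (add_le_add hB3 hP1) hP2
      _ = C₀ * τ^3 := by rw [hC₀def]; ring
  -- discrete Gronwall induction
  have hone : (1:ℝ) ≤ 1 + cs * τ := by
    have := mul_nonneg hcs0 hτ0'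
    linarith
  have hkey2 : ∀ n : ℕ, (n : ℝ) * τ ≤ T →
      ‖useq n - u ((n : ℝ) * τ)‖ ≤ C₀ * τ^3 * n * (1 + cs * τ)^n := by
    intro n
    induction n with
    | zero => intro _; simp [h0]
    | succ n ih =>
      intro hn1
      have hτn : (n : ℝ) * τ ≤ T := by
        push_cast at hn1 ⊢
        nlinarith
      have hen := ih hτn
      have hn0 : (0:ℝ) ≤ (n : ℝ) * τ := by positivity
      have hstep := hmain ((n : ℝ) * τ) hn0 (by push_cast at hn1 ⊢; linarith)
      have hcast : ((n + 1 : ℕ) : ℝ) * τ = (n : ℝ) * τ + τ := by push_cast; ring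
      have hdecomp : useq (n + 1) - u (((n + 1 : ℕ) : ℝ) * τ)
          = (Φ (useq n) - Φ (u ((n : ℝ) * τ))) + (Φ (u ((n : ℝ) * τ)) - u ((n : ℝ) * τ + τ)) := by
        rw [hrec' n, hcast]
        abel
      have h1pos : (0:ℝ) ≤ 1 + cs * τ := by linarith
      have hpow1 : (1:ℝ) ≤ (1 + cs * τ)^(n+1) := by
        calc (1:ℝ) = 1^(n+1) := (one_pow _).symm
          _ ≤ (1 + cs * τ)^(n+1) := pow_le_pow_left₀ zero_le_one hone _
      calc ‖useq (n + 1) - u (((n + 1 : ℕ) : ℝ) * τ)‖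
          = ‖(Φ (useq n) - Φ (u ((n : ℝ) * τ))) + (Φ (u ((n : ℝ) * τ)) - u ((n : ℝ) * τ + τ))‖ := by
            rw [hdecomp]
        _ ≤ ‖Φ (useq n) - Φ (u ((n : ℝ) * τ))‖ + ‖Φ (u ((n : ℝ) * τ)) - u ((n : ℝ) * τ + τ)‖ :=
            norm_add_le _ _
        _ ≤ (1 + cs * τ) * ‖useq n - u ((n : ℝ) * τ)‖ + C₀ * τ^3 :=
            add_le_add (hstab _ _) hstep
        _ ≤ (1 + cs * τ) * (C₀ * τ^3 * n * (1 + cs * τ)^n) + C₀ * τ^3 :=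
            add_le_add_left (mul_le_mul_of_nonneg_left hen h1pos) _
        _ = C₀ * τ^3 * n * (1 + cs * τ)^(n+1) + C₀ * τ^3 := by ring
        _ ≤ C₀ * τ^3 * n * (1 + cs * τ)^(n+1) + C₀ * τ^3 * (1 + cs * τ)^(n+1) := by
            have : C₀ * τ^3 ≤ C₀ * τ^3 * (1 + cs * τ)^(n+1) :=
              le_mul_of_one_le_right (by positivity) hpow1
            linarith
        _ = C₀ * τ^3 * (n + 1) * (1 + cs * τ)^(n+1) := by ring
        _ = C₀ * τ^3 * ((n + 1 : ℕ) : ℝ) * (1 + cs * τ)^(n+1) := by push_cast; ring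
  intro n hn
  refine (hkey2 n hn).trans ?_
  have hpow : (1 + cs * τ)^n ≤ Real.exp (cs * T) := by
    have h1 : (1 + cs * τ) ≤ Real.exp (cs * τ) := by
      have := Real.add_one_le_exp (cs * τ)
      linarith
    have h2 : (1 + cs * τ)^n ≤ Real.exp (cs * τ)^n :=
      pow_le_pow_left₀ (by linarith [mul_nonneg hcs0 hτ0']) h1 n
    refine h2.trans ?_
    rw [← Real.exp_nat_mul]
    rw [Real.exp_le_exp]
    calc (n : ℝ) * (cs * τ) = cs * ((n : ℝ) * τ) := by ring
      _ ≤ cs * T := mul_le_mul_of_nonneg_left hn hcs0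
  have hnτ0 : (0:ℝ) ≤ (n : ℝ) * τ := by positivity
  calc C₀ * τ^3 * n * (1 + cs * τ)^n = C₀ * τ^2 * ((n : ℝ) * τ) * (1 + cs * τ)^n := by ring
    _ ≤ C₀ * τ^2 * T * Real.exp (cs * T) := by
        have hp0 : (0:ℝ) ≤ (1 + cs * τ)^n := by positivity
        have e1 : C₀ * τ^2 * ((n : ℝ) * τ) * (1 + cs * τ)^n
            ≤ C₀ * τ^2 * T * (1 + cs * τ)^n := by
          refine mul_le_mul_of_nonneg_right ?_ hp0
          exact mul_le_mul_of_nonneg_left hn (by positivity)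
        refine e1.trans ?_
        exact mul_le_mul_of_nonneg_left hpow (by positivity)
    _ = C₀ * T * Real.exp (cs * T) * τ^2 := by ring
end

section
/- Let X be a real Banach space, A a continuous linear operator on X, and g : X → X twice continuously Fréchet differentiable with globally bounded first and second derivatives. Let T > 0 and let u : [0, T] → X be twice continuously differentiable with u′(t) = −A u(t) + g(u(t)) for all t ∈ [0, T]. Then there exists a constant C ≥ 0 such that for all τ ∈ (0, T] and all t_n ∈ [0, T − τ], the one-step predictor-corrector value S_τ u(t_n) = v + (τ/2)(g(v) − g(u(t_n))) with v = exp(−τ A) u(t_n) + (∫_0^τ exp(−(τ−s)A) ds)·g(u(t_n)) satisfies ‖S_τ u(t_n) − u(t_n + τ)‖ ≤ Cτ³. -/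
open NormedSpace intervalIntegral Set

section PCaux

lemma pc_norm_exp_le {𝔸 : Type*} [NormedRing 𝔸] [NormedAlgebra ℝ 𝔸] [CompleteSpace 𝔸]
    (hone : ‖(1 : 𝔸)‖ ≤ 1) (x : 𝔸) : ‖NormedSpace.exp x‖ ≤ Real.exp ‖x‖ := by
  have h1 : NormedSpace.exp x = ∑' n : ℕ, ((n.factorial : ℝ))⁻¹ • x ^ n := by
    rw [NormedSpace.exp_eq_tsum ℝ]
  have h2 : Real.exp ‖x‖ = ∑' n : ℕ, ((n.factorial : ℝ))⁻¹ • ‖x‖ ^ n := by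
    rw [Real.exp_eq_exp_ℝ, NormedSpace.exp_eq_tsum ℝ]
  rw [h1, h2]
  have hs : Summable fun n : ℕ => ‖((n.factorial : ℝ))⁻¹ • x ^ n‖ := by
    simpa [NormedSpace.expSeries_apply_eq] using NormedSpace.norm_expSeries_summable (𝕂 := ℝ) x
  refine (norm_tsum_le_tsum_norm hs).trans ?_
  refine Summable.tsum_le_tsum (fun n => ?_) hs ?_
  · rw [norm_smul, norm_inv, Real.norm_natCast, smul_eq_mul]
    refine mul_le_mul_of_nonneg_left ?_ (by positivity)
    rcases Nat.eq_zero_or_pos n with h | h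
    · simpa [h] using hone
    · exact norm_pow_le' x h
  · simpa [smul_eq_mul, div_eq_mul_inv, mul_comm] using Real.summable_pow_div_factorial ‖x‖

variable {𝔸 : Type*} [NormedRing 𝔸] [NormedAlgebra ℝ 𝔸] [CompleteSpace 𝔸]
  (B : 𝔸) (T : ℝ)

lemma pc_exp_bound (hone : ‖(1 : 𝔸)‖ ≤ 1) (s : ℝ) (hs : |s| ≤ T) :
    ‖NormedSpace.exp (s • B)‖ ≤ Real.exp (T * ‖B‖) := by
  refine (pc_norm_exp_le hone _).trans (Real.exp_le_exp.2 ?_)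
  rw [norm_smul, Real.norm_eq_abs]
  exact mul_le_mul_of_nonneg_right hs (norm_nonneg B)

lemma pc_exp_hasDerivAt (s : ℝ) :
    HasDerivAt (fun s : ℝ => NormedSpace.exp (s • B)) (NormedSpace.exp (s • B) * B) s :=
  hasDerivAt_exp_smul_const B s

lemma pc_exp_continuous : Continuous (fun s : ℝ => NormedSpace.exp (s • B)) := by
  have h : Differentiable ℝ (fun s : ℝ => NormedSpace.exp (s • B)) :=
    fun s => (pc_exp_hasDerivAt B s).differentiableAt
  exact h.continuous

lemma pc_abs_le_of_uIoc {r s : ℝ} (h : s ∈ Set.uIoc (0:ℝ) r) : |s| ≤ |r| := by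
  rw [Set.mem_uIoc] at h
  rcases h with ⟨h1, h2⟩ | ⟨h1, h2⟩ <;> rw [abs_le] <;>
    constructor <;> nlinarith [le_abs_self r, neg_abs_le r]

lemma pc_exp_sub_one (hone : ‖(1 : 𝔸)‖ ≤ 1) (r : ℝ) (hr : |r| ≤ T) :
    ‖NormedSpace.exp (r • B) - 1‖ ≤ (‖B‖ * Real.exp (T * ‖B‖)) * |r| := by
  have hftc : ∫ s in (0:ℝ)..r, NormedSpace.exp (s • B) * B
      = NormedSpace.exp (r • B) - 1 := by
    rw [intervalIntegral.integral_eq_sub_of_hasDerivAt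
      (fun t _ => pc_exp_hasDerivAt B t)
      (((pc_exp_continuous B).mul continuous_const).intervalIntegrable 0 r)]
    simp [NormedSpace.exp_zero]
  rw [← hftc]
  have := intervalIntegral.norm_integral_le_of_norm_le_const
    (C := ‖B‖ * Real.exp (T * ‖B‖)) (f := fun s => NormedSpace.exp (s • B) * B)
    (a := 0) (b := r) ?_
  · simpa using this
  · intro s hs
    calc ‖NormedSpace.exp (s • B) * B‖ ≤ ‖NormedSpace.exp (s • B)‖ * ‖B‖ := norm_mul_le _ _
    _ ≤ Real.exp (T * ‖B‖) * ‖B‖ :=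
        mul_le_mul_of_nonneg_right (pc_exp_bound B T hone s ((pc_abs_le_of_uIoc hs).trans hr))
          (norm_nonneg B)
    _ = ‖B‖ * Real.exp (T * ‖B‖) := mul_comm _ _

lemma pc_exp_sub_one_sub (hone : ‖(1 : 𝔸)‖ ≤ 1) (r : ℝ) (hr : |r| ≤ T) :
    ‖NormedSpace.exp (r • B) - 1 - r • B‖ ≤ (‖B‖ ^ 2 * Real.exp (T * ‖B‖)) * r ^ 2 := by
  have hftc : ∫ s in (0:ℝ)..r, (NormedSpace.exp (s • B) - 1) * B
      = NormedSpace.exp (r • B) - 1 - r • B := by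
    have : ∀ t : ℝ, HasDerivAt (fun s : ℝ => NormedSpace.exp (s • B) - s • B)
        ((NormedSpace.exp (t • B) - 1) * B) t := by
      intro t
      have h2 : HasDerivAt (fun s : ℝ => s • B) ((1:ℝ) • B) t := (hasDerivAt_id t).smul_const B
      have := (pc_exp_hasDerivAt B t).sub h2
      simpa [sub_mul, one_smul, Pi.sub_def] using this
    rw [intervalIntegral.integral_eq_sub_of_hasDerivAt (fun t _ => this t)
      ((((pc_exp_continuous B).sub continuous_const).mul continuous_const).intervalIntegrable 0 r)]
    simp [NormedSpace.exp_zero]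
    abel
  rw [← hftc]
  have := intervalIntegral.norm_integral_le_of_norm_le_const
    (C := (‖B‖ * Real.exp (T * ‖B‖)) * |r| * ‖B‖)
    (f := fun s => (NormedSpace.exp (s • B) - 1) * B) (a := 0) (b := r) ?_
  · calc ‖∫ s in (0:ℝ)..r, (NormedSpace.exp (s • B) - 1) * B‖
        ≤ (‖B‖ * Real.exp (T * ‖B‖)) * |r| * ‖B‖ * |r - 0| := this
    _ = (‖B‖ ^ 2 * Real.exp (T * ‖B‖)) * r ^ 2 := by
        have habs : |r| * |r| = r ^ 2 := by rw [abs_mul_abs_self]; ring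
        rw [sub_zero, ← habs]; ring
  · intro s hs
    have h1 : ‖NormedSpace.exp (s • B) - 1‖ ≤ (‖B‖ * Real.exp (T * ‖B‖)) * |s| :=
      pc_exp_sub_one B T hone s ((pc_abs_le_of_uIoc hs).trans hr)
    calc ‖(NormedSpace.exp (s • B) - 1) * B‖ ≤ ‖NormedSpace.exp (s • B) - 1‖ * ‖B‖ :=
          norm_mul_le _ _
    _ ≤ (‖B‖ * Real.exp (T * ‖B‖)) * |s| * ‖B‖ := by
        refine mul_le_mul_of_nonneg_right h1 (norm_nonneg B)
    _ ≤ (‖B‖ * Real.exp (T * ‖B‖)) * |r| * ‖B‖ := by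
        have h0 : 0 ≤ ‖B‖ * Real.exp (T * ‖B‖) := by positivity
        exact mul_le_mul_of_nonneg_right
          (mul_le_mul_of_nonneg_left (pc_abs_le_of_uIoc hs) h0) (norm_nonneg B)

end PCaux

section PCaux2
variable {X : Type*} [NormedAddCommGroup X] [NormedSpace ℝ X]
  (g : X → X) (K₁ K₂ : ℝ)

lemma pc_g_lip (hg : ContDiff ℝ 2 g) (hg1 : ∀ x : X, ‖fderiv ℝ g x‖ ≤ K₁)
    (x y : X) : ‖g y - g x‖ ≤ K₁ * ‖y - x‖ :=
  convex_univ.norm_image_sub_le_of_norm_fderiv_le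
    (fun z _ => (hg.differentiable (by norm_num)).differentiableAt)
    (fun z _ => hg1 z) trivial trivial

lemma pc_fderiv_lip (hg : ContDiff ℝ 2 g) (hg2 : ∀ x : X, ‖iteratedFDeriv ℝ 2 g x‖ ≤ K₂)
    (x y : X) : ‖fderiv ℝ g y - fderiv ℝ g x‖ ≤ K₂ * ‖y - x‖ := by
  have hd : ContDiff ℝ 1 (fderiv ℝ g) := hg.fderiv_right (by norm_num)
  refine convex_univ.norm_image_sub_le_of_norm_fderiv_le
    (fun z _ => (hd.differentiable (by norm_num)).differentiableAt)
    (fun z _ => ?_) trivial trivial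
  have h0 : ‖fderiv ℝ (fderiv ℝ g) z‖ = ‖iteratedFDeriv ℝ 0 (fderiv ℝ (fderiv ℝ g)) z‖ :=
    (norm_iteratedFDeriv_zero).symm
  rw [h0, norm_iteratedFDeriv_fderiv, norm_iteratedFDeriv_fderiv]
  exact hg2 z

lemma pc_g_taylor (hg : ContDiff ℝ 2 g) (hg2 : ∀ x : X, ‖iteratedFDeriv ℝ 2 g x‖ ≤ K₂)
    (x y : X) : ‖g y - g x - fderiv ℝ g x (y - x)‖ ≤ K₂ * ‖y - x‖ ^ 2 := by
  set h : X → X := fun z => g z - fderiv ℝ g x z with hh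
  have hdg : Differentiable ℝ g := hg.differentiable (by norm_num)
  have hder : ∀ z : X, HasFDerivAt h (fderiv ℝ g z - fderiv ℝ g x) z := fun z =>
    ((hdg z).hasFDerivAt).sub (fderiv ℝ g x).hasFDerivAt
  have key : ‖h y - h x‖ ≤ (K₂ * ‖y - x‖) * ‖y - x‖ := by
    refine (convex_segment x y).norm_image_sub_le_of_norm_hasFDerivWithin_le
      (fun z hz => (hder z).hasFDerivWithinAt) (fun z hz => ?_)
      (left_mem_segment ℝ x y) (right_mem_segment ℝ x y)
    have hz' : ‖z - x‖ ≤ ‖y - x‖ := by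
      rcases hz with ⟨a, b, ha, hb, hab, rfl⟩
      have : a • x + b • y - x = b • (y - x) := by
        rw [smul_sub]; rw [show a = 1 - b by linarith]; module
      rw [this, norm_smul, Real.norm_eq_abs, abs_of_nonneg hb]
      nlinarith [norm_nonneg (y - x)]
    calc ‖fderiv ℝ g z - fderiv ℝ g x‖ ≤ K₂ * ‖z - x‖ := pc_fderiv_lip g K₂ hg hg2 x z
    _ ≤ K₂ * ‖y - x‖ := by
        have hK : 0 ≤ K₂ := le_trans (norm_nonneg _) (hg2 x)
        exact mul_le_mul_of_nonneg_left hz' hK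
  have hhe : h y - h x = g y - g x - fderiv ℝ g x (y - x) := by
    simp only [hh, map_sub]; abel
  rw [← hhe]
  calc ‖h y - h x‖ ≤ (K₂ * ‖y - x‖) * ‖y - x‖ := key
  _ = K₂ * ‖y - x‖ ^ 2 := by ring
end PCaux2

section PCaux3
variable {X : Type*} [NormedAddCommGroup X] [NormedSpace ℝ X] [CompleteSpace X]

lemma pc_expA_hasDerivAt (A : X →L[ℝ] X) (τ s : ℝ) :
    HasDerivAt (fun s : ℝ => NormedSpace.exp ((s - τ) • A))
      (NormedSpace.exp ((s - τ) • A) * A) s := by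
  have h1 := hasDerivAt_exp_smul_const (𝕂 := ℝ) A (s - τ)
  have h2 : HasDerivAt (fun s : ℝ => s - τ) 1 s := (hasDerivAt_id s).sub_const τ
  have := h1.scomp s h2
  simpa [Function.comp_def] using this

lemma pc_voc (A : X →L[ℝ] X) (g : X → X) (hgc : Continuous g)
    (T : ℝ) (u : ℝ → X)
    (hu : ∀ t ∈ Set.Icc (0:ℝ) T,
      HasDerivWithinAt u (-(A (u t)) + g (u t)) (Set.Icc (0:ℝ) T) t)
    (τ tn : ℝ) (hτ : 0 < τ) (htn : 0 ≤ tn) (htn2 : tn + τ ≤ T) :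
    u (tn + τ) = NormedSpace.exp ((-τ) • A) (u tn) +
      ∫ s in (0:ℝ)..τ, NormedSpace.exp ((s - τ) • A) (g (u (tn + s))) := by
  set w : ℝ → X := fun s => NormedSpace.exp ((s - τ) • A) (u (tn + s)) with hw
  have hucont : ContinuousOn u (Set.Icc (0:ℝ) T) := fun t ht => (hu t ht).continuousWithinAt
  have hmaps : ∀ s ∈ Set.Icc (0:ℝ) τ, tn + s ∈ Set.Icc (0:ℝ) T := by
    intro s hs
    exact ⟨by linarith [hs.1], by linarith [hs.2]⟩
  have hexpc : Continuous (fun s : ℝ => NormedSpace.exp ((s - τ) • A)) := by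
    have h : Differentiable ℝ (fun s : ℝ => NormedSpace.exp ((s - τ) • A)) :=
      fun s => (pc_expA_hasDerivAt A τ s).differentiableAt
    exact h.continuous
  have hucomp : ContinuousOn (fun s : ℝ => u (tn + s)) (Set.Icc (0:ℝ) τ) :=
    hucont.comp (Continuous.continuousOn (by continuity)) hmaps
  have hwcont : ContinuousOn w (Set.Icc (0:ℝ) τ) :=
    hexpc.continuousOn.clm_apply hucomp
  have hderiv : ∀ s ∈ Set.Ioo (0:ℝ) τ, HasDerivAt w
      (NormedSpace.exp ((s - τ) • A) (g (u (tn + s)))) s := by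
    intro s hs
    have hmem : tn + s ∈ Set.Icc (0:ℝ) T := hmaps s ⟨hs.1.le, hs.2.le⟩
    have hnhds : Set.Icc (0:ℝ) T ∈ nhds (tn + s) :=
      Icc_mem_nhds (by linarith [hs.1]) (by linarith [hs.2])
    have hu' : HasDerivAt u (-(A (u (tn + s))) + g (u (tn + s))) (tn + s) :=
      (hu _ hmem).hasDerivAt hnhds
    have hψ : HasDerivAt (fun s : ℝ => u (tn + s))
        (-(A (u (tn + s))) + g (u (tn + s))) s := by
      have h2 : HasDerivAt (fun s : ℝ => tn + s) 1 s := (hasDerivAt_id s).const_add tn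
      simpa [Function.comp_def] using hu'.scomp s h2
    have := (pc_expA_hasDerivAt A τ s).clm_apply hψ
    have heq : (NormedSpace.exp ((s - τ) • A) * A) (u (tn + s)) +
        NormedSpace.exp ((s - τ) • A) (-(A (u (tn + s))) + g (u (tn + s))) =
        NormedSpace.exp ((s - τ) • A) (g (u (tn + s))) := by
      rw [ContinuousLinearMap.mul_apply, ← map_add]
      congr 1
      abel
    rw [heq] at this
    exact this
  have hint : IntervalIntegrable
      (fun s : ℝ => NormedSpace.exp ((s - τ) • A) (g (u (tn + s)))) MeasureTheory.volume 0 τ := by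
    apply ContinuousOn.intervalIntegrable
    rw [Set.uIcc_of_le hτ.le]
    exact hexpc.continuousOn.clm_apply (hgc.comp_continuousOn hucomp)
  have hftc := intervalIntegral.integral_eq_sub_of_hasDerivAt_of_le hτ.le hwcont hderiv hint
  have hw0 : w 0 = NormedSpace.exp ((-τ) • A) (u tn) := by
    simp [hw, zero_sub]
  have hwτ : w τ = u (tn + τ) := by
    simp [hw, NormedSpace.exp_zero]
  rw [hftc, hw0, hwτ]
  abel
end PCaux3
set_option maxHeartbeats 1000000 in
theorem predictor_corrector_local_error
    {X : Type*} [NormedAddCommGroup X] [NormedSpace ℝ X] [CompleteSpace X]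
    (A : X →L[ℝ] X) (g : X → X) (hg : ContDiff ℝ 2 g)
    (K₁ K₂ : ℝ)
    (hg1 : ∀ x : X, ‖fderiv ℝ g x‖ ≤ K₁)
    (hg2 : ∀ x : X, ‖iteratedFDeriv ℝ 2 g x‖ ≤ K₂)
    (T : ℝ) (hT : 0 < T) (u : ℝ → X)
    (hu2 : ContDiffOn ℝ 2 u (Set.Icc (0:ℝ) T))
    (hu : ∀ t ∈ Set.Icc (0:ℝ) T,
      HasDerivWithinAt u (-(A (u t)) + g (u t)) (Set.Icc (0:ℝ) T) t) :
    ∃ C : ℝ, 0 ≤ C ∧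
      ∀ (τ : ℝ), 0 < τ → τ ≤ T →
        ∀ tn : ℝ, 0 ≤ tn → tn ≤ T - τ →
          ‖(((NormedSpace.exp (-(τ • A))) (u tn) +
              (∫ s : ℝ in (0:ℝ)..τ, NormedSpace.exp (-((τ - s) • A))) (g (u tn))) +
            (τ / 2) • (g ((NormedSpace.exp (-(τ • A))) (u tn) +
              (∫ s : ℝ in (0:ℝ)..τ, NormedSpace.exp (-((τ - s) • A))) (g (u tn)))
              - g (u tn))) - u (tn + τ)‖ ≤ C * τ ^ 3 := by
  classical
  have hgc : Continuous g := hg.continuous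
  have hucont : ContinuousOn u (Set.Icc (0:ℝ) T) := fun t ht => (hu t ht).continuousWithinAt
  have hpcont : ContinuousOn (fun t => -(A (u t)) + g (u t)) (Set.Icc (0:ℝ) T) :=
    ((A.continuous.comp_continuousOn hucont).neg).add (hgc.comp_continuousOn hucont)
  obtain ⟨M₀', hM₀'⟩ := isCompact_Icc.exists_bound_of_continuousOn hucont
  obtain ⟨M₁', hM₁'⟩ := isCompact_Icc.exists_bound_of_continuousOn hpcont
  obtain ⟨Mg', hMg'⟩ := isCompact_Icc.exists_bound_of_continuousOn (hgc.comp_continuousOn hucont)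
  set M₀ : ℝ := max M₀' 0 with hM₀def
  set M₁ : ℝ := max M₁' 0 with hM₁def
  set Mg : ℝ := max Mg' 0 with hMgdef
  have hM₀nn : 0 ≤ M₀ := le_max_right _ _
  have hM₁nn : 0 ≤ M₁ := le_max_right _ _
  have hMgnn : 0 ≤ Mg := le_max_right _ _
  have hM₀ : ∀ t ∈ Set.Icc (0:ℝ) T, ‖u t‖ ≤ M₀ :=
    fun t ht => (hM₀' t ht).trans (le_max_left _ _)
  have hM₁ : ∀ t ∈ Set.Icc (0:ℝ) T, ‖-(A (u t)) + g (u t)‖ ≤ M₁ :=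
    fun t ht => (hM₁' t ht).trans (le_max_left _ _)
  have hMg : ∀ t ∈ Set.Icc (0:ℝ) T, ‖g (u t)‖ ≤ Mg :=
    fun t ht => (hMg' t ht).trans (le_max_left _ _)
  have hK₁ : 0 ≤ K₁ := le_trans (norm_nonneg _) (hg1 0)
  have hK₂ : 0 ≤ K₂ := le_trans (norm_nonneg _) (hg2 0)
  have ha : (0:ℝ) ≤ ‖A‖ := norm_nonneg _
  have hEb : (0:ℝ) < Real.exp (T * ‖A‖) := Real.exp_pos _
  set L : ℝ := (‖A‖ + K₁) * M₁ with hLdef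
  have hLnn : 0 ≤ L := mul_nonneg (add_nonneg ha hK₁) hM₁nn
  set Cv : ℝ := ‖A‖ ^ 2 * Real.exp (T * ‖A‖) * M₀ + ‖A‖ * Real.exp (T * ‖A‖) * Mg with hCvdef
  have hCvnn : 0 ≤ Cv := add_nonneg
    (mul_nonneg (mul_nonneg (pow_nonneg ha 2) hEb.le) hM₀nn)
    (mul_nonneg (mul_nonneg ha hEb.le) hMgnn)
  set Cw : ℝ := Cv * T + M₁ with hCwdef
  have hCwnn : 0 ≤ Cw := add_nonneg (mul_nonneg hCvnn hT.le) hM₁nn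
  set Ca : ℝ := ‖A‖ * Real.exp (T * ‖A‖) * (K₁ * M₁) + K₂ * M₁ ^ 2 + K₁ * L with hCadef
  have hCann : 0 ≤ Ca := add_nonneg (add_nonneg
    (mul_nonneg (mul_nonneg ha hEb.le) (mul_nonneg hK₁ hM₁nn))
    (mul_nonneg hK₂ (pow_nonneg hM₁nn 2))) (mul_nonneg hK₁ hLnn)
  refine ⟨Ca + (K₂ * Cw ^ 2 + K₁ * Cv) / 2, by positivity, ?_⟩
  intro τ hτ hτT tn htn htn2
  have htnIcc : tn ∈ Set.Icc (0:ℝ) T := ⟨htn, by linarith⟩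
  have htnτ : tn + τ ≤ T := by linarith
  have hone : ‖(1 : X →L[ℝ] X)‖ ≤ 1 := by
    rw [ContinuousLinearMap.one_def]; exact ContinuousLinearMap.norm_id_le
  -- rewrite the exponents
  have hform : ∀ s : ℝ, -((τ - s) • A) = (s - τ) • A := by
    intro s; rw [← neg_smul, neg_sub]
  have hformτ : -(τ • A) = (-τ) • A := by rw [neg_smul]
  rw [hformτ]
  simp only [hform]
  set u0 : X := u tn with hu0def
  set g0 : X := g u0 with hg0def
  set p0 : X := -(A u0) + g u0 with hp0def
  set D : X →L[ℝ] X := fderiv ℝ g u0 with hDdef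
  set E : X →L[ℝ] X := NormedSpace.exp ((-τ) • A) with hEdef
  set J : X →L[ℝ] X := ∫ s in (0:ℝ)..τ, NormedSpace.exp ((s - τ) • A) with hJdef
  set v : X := E u0 + J g0 with hvdef
  -- basic memberships / continuity
  have hmaps : ∀ s ∈ Set.Icc (0:ℝ) τ, tn + s ∈ Set.Icc (0:ℝ) T := by
    intro s hs; exact ⟨by linarith [hs.1], by linarith [hs.2]⟩
  have hexpc : Continuous (fun s : ℝ => NormedSpace.exp ((s - τ) • A)) := by
    have h : Differentiable ℝ (fun s : ℝ => NormedSpace.exp ((s - τ) • A)) :=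
      fun s => (pc_expA_hasDerivAt A τ s).differentiableAt
    exact h.continuous
  have hucomp : ContinuousOn (fun s : ℝ => u (tn + s)) (Set.Icc (0:ℝ) τ) :=
    hucont.comp (Continuous.continuousOn (continuous_const.add continuous_id)) hmaps
  -- variation of constants
  have hvoc := pc_voc A g hgc T u hu τ tn hτ htn htnτ
  -- exponential bounds
  have hEbnd : ‖E - 1 - (-τ) • A‖ ≤ (‖A‖ ^ 2 * Real.exp (T * ‖A‖)) * τ ^ 2 := by
    have := pc_exp_sub_one_sub A T hone (-τ) (by rw [abs_neg, abs_of_pos hτ]; exact hτT)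
    rwa [neg_sq] at this
  -- bound on the operator integral J
  have hJint : IntervalIntegrable (fun s : ℝ => NormedSpace.exp ((s - τ) • A))
      MeasureTheory.volume 0 τ := hexpc.intervalIntegrable 0 τ
  have hJconst : (∫ _ in (0:ℝ)..τ, (1 : X →L[ℝ] X)) = τ • (1 : X →L[ℝ] X) := by
    rw [intervalIntegral.integral_const, sub_zero]
  have hJsub : J - τ • (1 : X →L[ℝ] X)
      = ∫ s in (0:ℝ)..τ, (NormedSpace.exp ((s - τ) • A) - 1) := by
    rw [hJdef, ← hJconst, ← intervalIntegral.integral_sub hJint intervalIntegrable_const]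
  have hJbnd : ‖J - τ • (1 : X →L[ℝ] X)‖ ≤ (‖A‖ * Real.exp (T * ‖A‖)) * τ ^ 2 := by
    rw [hJsub]
    have hb := intervalIntegral.norm_integral_le_of_norm_le_const
      (C := (‖A‖ * Real.exp (T * ‖A‖)) * τ)
      (f := fun s : ℝ => NormedSpace.exp ((s - τ) • A) - 1) (a := 0) (b := τ) ?_
    · calc ‖∫ s in (0:ℝ)..τ, (NormedSpace.exp ((s - τ) • A) - 1)‖
          ≤ (‖A‖ * Real.exp (T * ‖A‖)) * τ * |τ - 0| := hb
      _ = (‖A‖ * Real.exp (T * ‖A‖)) * τ ^ 2 := by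
          rw [sub_zero, abs_of_pos hτ]; ring
    · intro s hs
      rw [Set.uIoc_of_le hτ.le] at hs
      have h1 : |s - τ| ≤ T := by
        rw [abs_le]; constructor <;> [linarith [hs.1, hs.2]; linarith [hs.1, hs.2]]
      have h2 := pc_exp_sub_one A T hone (s - τ) h1
      refine h2.trans ?_
      have h3 : |s - τ| ≤ τ := by rw [abs_le]; constructor <;> linarith [hs.1.le, hs.2]
      exact mul_le_mul_of_nonneg_left h3 (by positivity)
  -- pointwise bounds from compactness
  have hu0M : ‖u0‖ ≤ M₀ := hM₀ tn htnIcc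
  have hg0M : ‖g0‖ ≤ Mg := hMg tn htnIcc
  have hp0M : ‖p0‖ ≤ M₁ := hM₁ tn htnIcc
  -- Lipschitz bound for u on [0,T]
  have hulip : ∀ x ∈ Set.Icc (0:ℝ) T, ∀ y ∈ Set.Icc (0:ℝ) T, ‖u y - u x‖ ≤ M₁ * ‖y - x‖ := by
    intro x hx y hy
    exact (convex_Icc (0:ℝ) T).norm_image_sub_le_of_norm_hasDerivWithin_le
      (fun t ht => hu t ht) (fun t ht => hM₁ t ht) hx hy
  -- Lipschitz bound for the derivative t ↦ -(A (u t)) + g (u t)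
  have hplip : ∀ x ∈ Set.Icc (0:ℝ) T, ∀ y ∈ Set.Icc (0:ℝ) T,
      ‖(-(A (u y)) + g (u y)) - (-(A (u x)) + g (u x))‖ ≤ L * ‖y - x‖ := by
    intro x hx y hy
    have h1 : (-(A (u y)) + g (u y)) - (-(A (u x)) + g (u x))
        = -(A (u y - u x)) + (g (u y) - g (u x)) := by
      rw [map_sub]; abel
    rw [h1]
    calc ‖-(A (u y - u x)) + (g (u y) - g (u x))‖
        ≤ ‖A (u y - u x)‖ + ‖g (u y) - g (u x)‖ := by
          refine (norm_add_le _ _).trans ?_; rw [norm_neg]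
    _ ≤ ‖A‖ * ‖u y - u x‖ + K₁ * ‖u y - u x‖ :=
        add_le_add (A.le_opNorm _) (pc_g_lip g K₁ hg hg1 (u x) (u y))
    _ ≤ ‖A‖ * (M₁ * ‖y - x‖) + K₁ * (M₁ * ‖y - x‖) :=
        add_le_add (mul_le_mul_of_nonneg_left (hulip x hx y hy) ha)
          (mul_le_mul_of_nonneg_left (hulip x hx y hy) hK₁)
    _ = L * ‖y - x‖ := by rw [hLdef]; ring
  -- second order Taylor bound for u
  have hutay : ∀ s ∈ Set.Icc (0:ℝ) τ, ‖u (tn + s) - u0 - s • p0‖ ≤ L * s ^ 2 := by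
    intro s hs
    set ψ : ℝ → X := fun σ => u (tn + σ) - σ • p0 with hψdef
    have hψder : ∀ σ ∈ Set.Icc (0:ℝ) s,
        HasDerivWithinAt ψ ((-(A (u (tn + σ))) + g (u (tn + σ))) - p0) (Set.Icc (0:ℝ) s) σ := by
      intro σ hσ
      have hmem : tn + σ ∈ Set.Icc (0:ℝ) T := by
        constructor
        · linarith [hσ.1]
        · have := hσ.2; have := hs.2; linarith [hσ.1]
      have hshift : HasDerivWithinAt (fun σ : ℝ => tn + σ) 1 (Set.Icc (0:ℝ) s) σ :=
        ((hasDerivAt_id σ).const_add tn).hasDerivWithinAt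
      have hmapsTo : Set.MapsTo (fun σ : ℝ => tn + σ) (Set.Icc (0:ℝ) s) (Set.Icc (0:ℝ) T) := by
        intro σ' hσ'
        constructor
        · simp only; linarith [hσ'.1]
        · simp only; have := hσ'.2; have := hs.2; linarith
      have h1 : HasDerivWithinAt (fun σ : ℝ => u (tn + σ))
          (-(A (u (tn + σ))) + g (u (tn + σ))) (Set.Icc (0:ℝ) s) σ := by
        have := (hu (tn + σ) hmem).scomp σ hshift hmapsTo
        simpa [Function.comp_def] using this
      have h2 : HasDerivWithinAt (fun σ : ℝ => σ • p0) p0 (Set.Icc (0:ℝ) s) σ := by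
        have := ((hasDerivAt_id σ).smul_const p0).hasDerivWithinAt
          (s := Set.Icc (0:ℝ) s)
        simpa using this
      exact h1.sub h2
    have hψbound : ∀ σ ∈ Set.Icc (0:ℝ) s,
        ‖(-(A (u (tn + σ))) + g (u (tn + σ))) - p0‖ ≤ L * s := by
      intro σ hσ
      have hmem : tn + σ ∈ Set.Icc (0:ℝ) T := by
        constructor
        · linarith [hσ.1]
        · have := hσ.2; have := hs.2; linarith [hσ.1]
      have := hplip tn htnIcc (tn + σ) hmem
      have heq : ‖(tn + σ) - tn‖ = σ := by
        rw [add_sub_cancel_left, Real.norm_eq_abs, abs_of_nonneg hσ.1]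
      rw [heq] at this
      refine this.trans (mul_le_mul_of_nonneg_left hσ.2 hLnn)
    have hkey := (convex_Icc (0:ℝ) s).norm_image_sub_le_of_norm_hasDerivWithin_le
      hψder hψbound (Set.left_mem_Icc.2 hs.1) (Set.right_mem_Icc.2 hs.1)
    have hψ0 : ψ 0 = u0 := by simp [hψdef, hu0def]
    have hψs : ψ s = u (tn + s) - s • p0 := rfl
    rw [hψ0, hψs] at hkey
    have : ‖s - 0‖ = s := by rw [sub_zero, Real.norm_eq_abs, abs_of_nonneg hs.1]
    rw [this] at hkey
    calc ‖u (tn + s) - u0 - s • p0‖ = ‖u (tn + s) - s • p0 - u0‖ := by rw [sub_right_comm]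
    _ ≤ L * s * s := hkey
    _ = L * s ^ 2 := by ring
  -- predictor consistency
  have hvid : v - u0 - τ • p0 = (E - 1 - (-τ) • A) u0 + (J - τ • (1 : X →L[ℝ] X)) g0 := by
    simp only [hvdef, hp0def, hg0def, ContinuousLinearMap.sub_apply,
      ContinuousLinearMap.smul_apply, ContinuousLinearMap.neg_apply,
      ContinuousLinearMap.one_apply, smul_add, smul_neg, neg_smul]
    abel
  have hvtay : ‖v - u0 - τ • p0‖ ≤ Cv * τ ^ 2 := by
    rw [hvid]
    calc ‖(E - 1 - (-τ) • A) u0 + (J - τ • (1 : X →L[ℝ] X)) g0‖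
        ≤ ‖(E - 1 - (-τ) • A) u0‖ + ‖(J - τ • (1 : X →L[ℝ] X)) g0‖ := norm_add_le _ _
    _ ≤ ‖E - 1 - (-τ) • A‖ * ‖u0‖ + ‖J - τ • (1 : X →L[ℝ] X)‖ * ‖g0‖ :=
        add_le_add (ContinuousLinearMap.le_opNorm _ _) (ContinuousLinearMap.le_opNorm _ _)
    _ ≤ (‖A‖ ^ 2 * Real.exp (T * ‖A‖)) * τ ^ 2 * M₀
        + (‖A‖ * Real.exp (T * ‖A‖)) * τ ^ 2 * Mg :=
        add_le_add (mul_le_mul hEbnd hu0M (norm_nonneg _) (by positivity))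
          (mul_le_mul hJbnd hg0M (norm_nonneg _) (by positivity))
    _ = Cv * τ ^ 2 := by rw [hCvdef]; ring
  have hvclose : ‖v - u0‖ ≤ Cw * τ := by
    have hsplit : v - u0 = (v - u0 - τ • p0) + τ • p0 := by abel
    rw [hsplit]
    calc ‖(v - u0 - τ • p0) + τ • p0‖ ≤ ‖v - u0 - τ • p0‖ + ‖τ • p0‖ := norm_add_le _ _
    _ ≤ Cv * τ ^ 2 + τ * M₁ := by
        refine add_le_add hvtay ?_
        rw [norm_smul, Real.norm_eq_abs, abs_of_pos hτ]
        exact mul_le_mul_of_nonneg_left hp0M hτ.le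
    _ ≤ Cw * τ := by
        rw [hCwdef]
        have h : Cv * τ ^ 2 ≤ Cv * T * τ := by
          nlinarith [mul_nonneg hCvnn (mul_nonneg (sub_nonneg.2 hτT) hτ.le)]
        linarith
  -- corrector term
  set TB : X := (τ / 2) • (g v - g0) - (τ ^ 2 / 2) • D p0 with hTBdef
  have hTBid : TB = (τ / 2) • ((g v - g0 - D (v - u0)) + D (v - u0 - τ • p0)) := by
    have h1 : D (v - u0 - τ • p0) = D (v - u0) - τ • D p0 := by rw [map_sub, map_smul]
    rw [hTBdef, h1]
    module
  have hgtv : ‖g v - g0 - D (v - u0)‖ ≤ K₂ * ‖v - u0‖ ^ 2 := pc_g_taylor g K₂ hg hg2 u0 v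
  have hTBbnd : ‖TB‖ ≤ ((K₂ * Cw ^ 2 + K₁ * Cv) / 2) * τ ^ 3 := by
    rw [hTBid, norm_smul, Real.norm_eq_abs, abs_of_pos (by positivity : (0:ℝ) < τ / 2)]
    have hb1 : ‖g v - g0 - D (v - u0)‖ ≤ K₂ * (Cw * τ) ^ 2 :=
      hgtv.trans (mul_le_mul_of_nonneg_left
        (pow_le_pow_left₀ (norm_nonneg _) hvclose 2) hK₂)
    have hb2 : ‖D (v - u0 - τ • p0)‖ ≤ K₁ * (Cv * τ ^ 2) :=
      (D.le_opNorm _).trans (mul_le_mul (hg1 u0) hvtay (norm_nonneg _) hK₁)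
    calc (τ / 2) * ‖(g v - g0 - D (v - u0)) + D (v - u0 - τ • p0)‖
        ≤ (τ / 2) * (K₂ * (Cw * τ) ^ 2 + K₁ * (Cv * τ ^ 2)) := by
          refine mul_le_mul_of_nonneg_left ?_ (by positivity)
          exact (norm_add_le _ _).trans (add_le_add hb1 hb2)
    _ = ((K₂ * Cw ^ 2 + K₁ * Cv) / 2) * τ ^ 3 := by ring
  -- integral (consistency) term
  have hi1 : IntervalIntegrable (fun s : ℝ => NormedSpace.exp ((s - τ) • A) g0)
      MeasureTheory.volume 0 τ := (hexpc.clm_apply continuous_const).intervalIntegrable 0 τ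
  have hi2 : IntervalIntegrable (fun s : ℝ => NormedSpace.exp ((s - τ) • A) (g (u (tn + s))))
      MeasureTheory.volume 0 τ := by
    apply ContinuousOn.intervalIntegrable
    rw [Set.uIcc_of_le hτ.le]
    exact hexpc.continuousOn.clm_apply (hgc.comp_continuousOn hucomp)
  have hi3 : IntervalIntegrable (fun s : ℝ => s • D p0) MeasureTheory.volume 0 τ :=
    (continuous_id.smul continuous_const).intervalIntegrable 0 τ
  have hJapp : J g0 = ∫ s in (0:ℝ)..τ, NormedSpace.exp ((s - τ) • A) g0 :=
    ContinuousLinearMap.intervalIntegral_apply hJint g0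
  have hI3 : (∫ s in (0:ℝ)..τ, s • D p0) = (τ ^ 2 / 2) • D p0 := by
    rw [intervalIntegral.integral_smul_const, integral_id]
    norm_num
  set I : X := ∫ s in (0:ℝ)..τ, NormedSpace.exp ((s - τ) • A) (g (u (tn + s))) with hIdef
  set TA : X := J g0 - I + (τ ^ 2 / 2) • D p0 with hTAdef
  have hTAint : TA = ∫ s in (0:ℝ)..τ,
      (NormedSpace.exp ((s - τ) • A) g0
        - NormedSpace.exp ((s - τ) • A) (g (u (tn + s))) + s • D p0) := by
    rw [hTAdef, hJapp, hIdef, ← hI3, ← intervalIntegral.integral_sub hi1 hi2,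
      ← intervalIntegral.integral_add (hi1.sub hi2) hi3]
  have hFbnd : ∀ s ∈ Set.uIoc (0:ℝ) τ,
      ‖NormedSpace.exp ((s - τ) • A) g0
        - NormedSpace.exp ((s - τ) • A) (g (u (tn + s))) + s • D p0‖ ≤ Ca * τ ^ 2 := by
    intro s hs
    rw [Set.uIoc_of_le hτ.le] at hs
    have hsIcc : s ∈ Set.Icc (0:ℝ) τ := ⟨hs.1.le, hs.2⟩
    have huts : tn + s ∈ Set.Icc (0:ℝ) T := hmaps s hsIcc
    have habs : |s - τ| ≤ T := by
      rw [abs_le]; constructor <;> linarith [hs.1.le, hs.2]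
    have habs2 : |s - τ| ≤ τ := by
      rw [abs_le]; constructor <;> linarith [hs.1.le, hs.2]
    -- Lipschitz bound on q = g0 - g (u (tn+s))
    have hdist : ‖u (tn + s) - u0‖ ≤ M₁ * s := by
      have := hulip tn htnIcc (tn + s) huts
      have heq : ‖(tn + s) - tn‖ = s := by
        rw [add_sub_cancel_left, Real.norm_eq_abs, abs_of_nonneg hs.1.le]
      rwa [heq] at this
    have hq : ‖g0 - g (u (tn + s))‖ ≤ K₁ * (M₁ * s) := by
      have h1 := pc_g_lip g K₁ hg hg1 (u (tn + s)) u0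
      have h2 : ‖u0 - u (tn + s)‖ = ‖u (tn + s) - u0‖ := norm_sub_rev _ _
      rw [h2] at h1
      exact h1.trans (mul_le_mul_of_nonneg_left hdist hK₁)
    -- decomposition
    have hid : NormedSpace.exp ((s - τ) • A) g0
        - NormedSpace.exp ((s - τ) • A) (g (u (tn + s))) + s • D p0
        = (NormedSpace.exp ((s - τ) • A) - 1) (g0 - g (u (tn + s)))
          + ((g0 - g (u (tn + s))) + s • D p0) := by
      rw [← map_sub, ContinuousLinearMap.sub_apply, ContinuousLinearMap.one_apply]
      abel
    have hid2 : (g0 - g (u (tn + s))) + s • D p0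
        = -((g (u (tn + s)) - g0 - D (u (tn + s) - u0))
          + D (u (tn + s) - u0 - s • p0)) := by
      have h1 : D (u (tn + s) - u0 - s • p0) = D (u (tn + s) - u0) - s • D p0 := by
        rw [map_sub, map_smul]
      rw [h1]; abel
    have hb1 : ‖(NormedSpace.exp ((s - τ) • A) - 1) (g0 - g (u (tn + s)))‖
        ≤ (‖A‖ * Real.exp (T * ‖A‖)) * τ * (K₁ * (M₁ * s)) := by
      refine (ContinuousLinearMap.le_opNorm _ _).trans ?_
      refine mul_le_mul ?_ hq (norm_nonneg _) (by positivity)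
      refine (pc_exp_sub_one A T hone (s - τ) habs).trans ?_
      exact mul_le_mul_of_nonneg_left habs2 (by positivity)
    have hb2 : ‖(g0 - g (u (tn + s))) + s • D p0‖
        ≤ K₂ * (M₁ * s) ^ 2 + K₁ * (L * s ^ 2) := by
      rw [hid2, norm_neg]
      refine (norm_add_le _ _).trans (add_le_add ?_ ?_)
      · refine (pc_g_taylor g K₂ hg hg2 u0 (u (tn + s))).trans ?_
        exact mul_le_mul_of_nonneg_left (pow_le_pow_left₀ (norm_nonneg _) hdist 2) hK₂
      · refine (D.le_opNorm _).trans ?_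
        exact mul_le_mul (hg1 u0) (hutay s hsIcc) (norm_nonneg _) hK₁
    rw [hid]
    refine (norm_add_le _ _).trans ((add_le_add hb1 hb2).trans ?_)
    calc (‖A‖ * Real.exp (T * ‖A‖)) * τ * (K₁ * (M₁ * s))
          + (K₂ * (M₁ * s) ^ 2 + K₁ * (L * s ^ 2))
        ≤ (‖A‖ * Real.exp (T * ‖A‖)) * τ * (K₁ * (M₁ * τ))
          + (K₂ * (M₁ * τ) ^ 2 + K₁ * (L * τ ^ 2)) := by
          gcongr <;> first | exact hs.1.le | exact hs.2 | exact mul_nonneg hM₁nn hs.1.le | exact hM₁nn | exact hLnn | exact hK₁ | exact hK₂ | positivity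
    _ = Ca * τ ^ 2 := by rw [hCadef]; ring
  have hTAbnd : ‖TA‖ ≤ Ca * τ ^ 3 := by
    rw [hTAint]
    have := intervalIntegral.norm_integral_le_of_norm_le_const hFbnd
    calc ‖∫ s in (0:ℝ)..τ, (NormedSpace.exp ((s - τ) • A) g0
          - NormedSpace.exp ((s - τ) • A) (g (u (tn + s))) + s • D p0)‖
        ≤ Ca * τ ^ 2 * |τ - 0| := this
    _ = Ca * τ ^ 3 := by rw [sub_zero, abs_of_pos hτ]; ring
  -- final assembly
  have hfinal : v + (τ / 2) • (g v - g0) - u (tn + τ) = TA + TB := by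
    rw [hvoc, hTAdef, hTBdef, hvdef]
    abel
  rw [hfinal]
  calc ‖TA + TB‖ ≤ ‖TA‖ + ‖TB‖ := norm_add_le _ _
  _ ≤ Ca * τ ^ 3 + ((K₂ * Cw ^ 2 + K₁ * Cv) / 2) * τ ^ 3 := add_le_add hTAbnd hTBbnd
  _ = (Ca + (K₂ * Cw ^ 2 + K₁ * Cv) / 2) * τ ^ 3 := by ring
end
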